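/- arXiv:2501.18267 — 3 statements merged into one kernel-verified Lean document; each statement's English description precedes it below -/
import Mathlib

section
/- The elliptic Artin monoid M'(D̃₄^{(1,1)}) is cancellative: for all elements u, v, w of M'(D̃₄^{(1,1)}), u·v = u·w implies v = w, and v·u = w·u implies v = w. -/
/-!
Every defining relation has the form `x · f x y = y · f y x` for the complement
`f tᵢ tₖ = tᵢ₋₁`, `f tᵢ sⱼ = sⱼ tᵢ`, `f sⱼ tᵢ = tᵢ sⱼ`, `f sⱼ sₖ = sₖ` (`i ≠ k`, `j ≠ k`),
`f x x = 1`, and both sides have the same length. Following Dehornoy's theory of complemented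
presentations, one proves by induction on the length that `x u ≡ y v` forces `u ≡ f x y · w` and
`v ≡ f y x · w` for some `w`; for `x = y` this is left cancellation. The induction step is the cube
condition for triples of distinct generators, checked case by case through explicit word
computations that call the induction hypothesis on shorter words. Right cancellation follows by
the anti-automorphism `tᵢ ↦ t₋ᵢ`, `sⱼ ↦ sⱼ`.
-/

namespace EllipticD4Monoid

/-- Generators: `Sum.inl i` is `tᵢ` (`i ∈ ℤ`), `Sum.inr j` is `sⱼ` (`j ∈ {1,2,3,4}`). -/
abbrev S : Type := ℤ ⊕ Fin 4

def t (i : ℤ) : FreeMonoid S := FreeMonoid.of (Sum.inl i)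
def s (j : Fin 4) : FreeMonoid S := FreeMonoid.of (Sum.inr j)

/-- The defining relations of `M'(D̃₄^{(1,1)})`:
(R1) `tᵢsⱼtᵢ = sⱼtᵢsⱼ` for `i ∈ ℤ`, `j ∈ {1,2,3,4}`;
(R2) `sᵢsⱼ = sⱼsᵢ` for `i ≠ j`;
(R3) `tᵢtᵢ₋₁ = tⱼtⱼ₋₁` for all `i, j ∈ ℤ`. -/
def rels : FreeMonoid S → FreeMonoid S → Prop := fun a b =>
  (∃ i j, a = t i * s j * t i ∧ b = s j * t i * s j) ∨
  (∃ i j, i ≠ j ∧ a = s i * s j ∧ b = s j * s i) ∨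
  (∃ i j : ℤ, a = t i * t (i - 1) ∧ b = t j * t (j - 1))

/-- The elliptic Artin monoid `M'(D̃₄^{(1,1)})`. -/
abbrev M := PresentedMonoid rels

end EllipticD4Monoid

namespace ComplementedPresentation

open Relation

variable {α : Type*}

def Rewrite (R : List α → List α → Prop) (a b : List α) : Prop :=
  ∃ p l r q, R l r ∧ a = p ++ l ++ q ∧ b = p ++ r ++ q

section Rewrite

variable {R : List α → List α → Prop} {a b : List α}

theorem Rewrite.append_append (h : Rewrite R a b) (c d : List α) :
    Rewrite R (c ++ a ++ d) (c ++ b ++ d) := by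
  obtain ⟨p, l, r, q, hR, rfl, rfl⟩ := h
  exact ⟨c ++ p, l, r, q ++ d, hR, by simp, by simp⟩

theorem _root_.Relation.EqvGen.rewrite_append_append (h : EqvGen (Rewrite R) a b)
    (c d : List α) : EqvGen (Rewrite R) (c ++ a ++ d) (c ++ b ++ d) := by
  induction h with
  | rel _ _ h => exact .rel _ _ (h.append_append c d)
  | refl => exact .refl _
  | symm _ _ _ ih => exact ih.symm
  | trans _ _ _ _ _ ih₁ ih₂ => exact ih₁.trans _ _ _ ih₂

theorem _root_.Relation.EqvGen.rewrite_append {c d : List α} (h₁ : EqvGen (Rewrite R) a b)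
    (h₂ : EqvGen (Rewrite R) c d) : EqvGen (Rewrite R) (a ++ c) (b ++ d) := by
  have h₁' := h₁.rewrite_append_append [] c
  have h₂' := h₂.rewrite_append_append b []
  simp only [List.nil_append, List.append_nil] at h₁' h₂'
  exact h₁'.trans _ _ _ h₂'

theorem conGen_iff_eqvGen_rewrite {r : FreeMonoid α → FreeMonoid α → Prop}
    {a b : FreeMonoid α} :
    conGen r a b ↔
      EqvGen (Rewrite fun l l' => r (.ofList l) (.ofList l')) a.toList b.toList := by
  constructor
  · intro h
    induction h with
    | of x y h => exact .rel _ _ ⟨[], x.toList, y.toList, [], h, by simp, by simp⟩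
    | refl => exact .refl _
    | symm _ ih => exact ih.symm
    | trans _ _ ih₁ ih₂ => exact ih₁.trans _ _ _ ih₂
    | mul _ _ ih₁ ih₂ => exact ih₁.rewrite_append ih₂
  · suffices ∀ l l', EqvGen (Rewrite fun l l' => r (.ofList l) (.ofList l')) l l' →
        conGen r (.ofList l) (.ofList l') from this _ _
    intro l l' h
    induction h with
    | rel _ _ h =>
      obtain ⟨p, l, l', q, h, rfl, rfl⟩ := h
      exact (conGen r).mul ((conGen r).mul ((conGen r).refl (.ofList p)) (.of _ _ h))
        ((conGen r).refl (.ofList q))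
    | refl => exact .refl _
    | symm _ _ _ ih => exact ih.symm
    | trans _ _ _ _ _ ih₁ ih₂ => exact ih₁.trans ih₂

end Rewrite

variable (f : α → α → List α)

def ComplementRel (a b : List α) : Prop := ∃ x y, a = x :: f x y ∧ b = y :: f y x

def ComplementEqv : List α → List α → Prop := EqvGen (Rewrite (ComplementRel f))

structure IsHomogeneousComplement : Prop where
  self_eq_nil : ∀ x, f x x = []
  length_comm : ∀ x y, (f x y).length = (f y x).length

/-- `x · f x y` is a least common right multiple of the letters `x` and `y`, as tested on words
of length `≤ n`. -/
def FactorsThroughComplement (n : ℕ) : Prop :=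
  ∀ x y u v, u.length < n → ComplementEqv f (x :: u) (y :: v) →
    ∃ w, ComplementEqv f u (f x y ++ w) ∧ ComplementEqv f v (f y x ++ w)

/-- Dehornoy's cube condition for distinct letters `x`, `y`, `z`, on words of length `≤ n`. -/
def CubeConditionAt (n : ℕ) : Prop :=
  ∀ x y z p q, x ≠ y → z ≠ x → z ≠ y → (f z x ++ p).length ≤ n →
    ComplementEqv f (f z x ++ p) (f z y ++ q) →
    ∃ w, ComplementEqv f (f x z ++ p) (f x y ++ w) ∧ ComplementEqv f (f y z ++ q) (f y x ++ w)

variable {f}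

namespace ComplementEqv

variable {a b c d : List α}

theorem refl (l : List α) : ComplementEqv f l l := EqvGen.refl l

theorem symm (h : ComplementEqv f a b) : ComplementEqv f b a := EqvGen.symm _ _ h

theorem trans (h₁ : ComplementEqv f a b) (h₂ : ComplementEqv f b c) : ComplementEqv f a c :=
  EqvGen.trans _ _ _ h₁ h₂

instance : Trans (ComplementEqv f) (ComplementEqv f) (ComplementEqv f) := ⟨trans⟩

theorem of_rewrite (h : Rewrite (ComplementRel f) a b) : ComplementEqv f a b := EqvGen.rel _ _ h

theorem append (h₁ : ComplementEqv f a b) (h₂ : ComplementEqv f c d) :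
    ComplementEqv f (a ++ c) (b ++ d) :=
  EqvGen.rewrite_append h₁ h₂

theorem append_left (l : List α) (h : ComplementEqv f a b) :
    ComplementEqv f (l ++ a) (l ++ b) :=
  (refl l).append h

theorem cons (x : α) (h : ComplementEqv f a b) : ComplementEqv f (x :: a) (x :: b) :=
  h.append_left [x]

theorem length_eq (hf : IsHomogeneousComplement f) (h : ComplementEqv f a b) :
    a.length = b.length := by
  induction h with
  | rel _ _ h =>
    obtain ⟨p, _, _, q, ⟨x, y, rfl, rfl⟩, rfl, rfl⟩ := h
    simp [hf.length_comm x y]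
  | refl => rfl
  | symm _ _ _ ih => exact ih.symm
  | trans _ _ _ _ _ ih₁ ih₂ => exact ih₁.trans ih₂

end ComplementEqv

theorem exists_of_rewrite_cons (hf : IsHomogeneousComplement f) {x z : α} {u m : List α}
    (h : Rewrite (ComplementRel f) (x :: u) (z :: m)) :
    ∃ w, ComplementEqv f u (f x z ++ w) ∧ ComplementEqv f m (f z x ++ w) := by
  obtain ⟨p, l, r, q, hR, hl, hr⟩ := h
  cases p with
  | cons g p =>
    simp only [List.cons_append, List.cons.injEq] at hl hr
    obtain ⟨rfl, rfl⟩ := hl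
    obtain ⟨rfl, rfl⟩ := hr
    simp only [hf.self_eq_nil, List.nil_append]
    exact ⟨p ++ l ++ q, .refl _, (ComplementEqv.of_rewrite ⟨p, l, r, q, hR, rfl, rfl⟩).symm⟩
  | nil =>
    obtain ⟨x', y', rfl, rfl⟩ := hR
    simp only [List.nil_append, List.cons_append, List.cons.injEq] at hl hr
    obtain ⟨rfl, rfl⟩ := hl
    obtain ⟨rfl, rfl⟩ := hr
    exact ⟨q, .refl _, .refl _⟩

namespace FactorsThroughComplement

variable {n : ℕ}

theorem cons_cancel (hn : FactorsThroughComplement f n) (hf : IsHomogeneousComplement f) {x : α}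
    {u v : List α} (hu : u.length < n) (h : ComplementEqv f (x :: u) (x :: v)) :
    ComplementEqv f u v := by
  obtain ⟨w, hu, hv⟩ := hn x x u v hu h
  rw [hf.self_eq_nil, List.nil_append] at hu hv
  exact hu.trans hv.symm

theorem append_cancel_left (hn : FactorsThroughComplement f n) (hf : IsHomogeneousComplement f)
    {c p q : List α} (hl : (c ++ p).length ≤ n) (h : ComplementEqv f (c ++ p) (c ++ q)) :
    ComplementEqv f p q := by
  induction c with
  | nil => exact h
  | cons x c ih =>
    simp only [List.cons_append, List.length_cons] at hl h
    exact ih (by omega) (hn.cons_cancel hf (by omega) h)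

theorem cube (hn : FactorsThroughComplement f n) (hf : IsHomogeneousComplement f)
    (hcube : CubeConditionAt f n) (x y z : α) {p q : List α} (hl : (f z x ++ p).length ≤ n)
    (h : ComplementEqv f (f z x ++ p) (f z y ++ q)) :
    ∃ w, ComplementEqv f (f x z ++ p) (f x y ++ w) ∧
      ComplementEqv f (f y z ++ q) (f y x ++ w) := by
  by_cases hzx : z = x
  · subst hzx
    rw [hf.self_eq_nil, List.nil_append] at h ⊢
    exact ⟨q, h, .refl _⟩
  by_cases hzy : z = y
  · subst hzy
    rw [hf.self_eq_nil, List.nil_append] at h ⊢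
    exact ⟨p, .refl _, h.symm⟩
  by_cases hxy : x = y
  · subst hxy
    simp only [hf.self_eq_nil, List.nil_append]
    exact ⟨f x z ++ p, .refl _, (hn.append_cancel_left hf hl h).symm.append_left _⟩
  exact hcube x y z p q hxy hzx hzy hl h

theorem succ (hn : FactorsThroughComplement f n) (hf : IsHomogeneousComplement f)
    (hcube : CubeConditionAt f n) : FactorsThroughComplement f (n + 1) := by
  suffices ∀ a b, ComplementEqv f a b → ∀ x u y v, a = x :: u → b = y :: v → u.length ≤ n →
      ∃ w, ComplementEqv f u (f x y ++ w) ∧ ComplementEqv f v (f y x ++ w) from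
    fun x y u v hu h => this _ _ h x u y v rfl rfl (by omega)
  intro a b h
  induction h with
  | rel _ _ h =>
    rintro x u y v rfl rfl -
    exact exists_of_rewrite_cons hf h
  | refl =>
    rintro x u y v rfl h -
    obtain ⟨rfl, rfl⟩ := List.cons.inj h
    simp only [hf.self_eq_nil, List.nil_append]
    exact ⟨u, .refl _, .refl _⟩
  | symm _ _ h ih =>
    rintro x u y v rfl rfl hu
    have hvu : v.length = u.length := by simpa using ComplementEqv.length_eq hf h
    obtain ⟨w, hv, hu⟩ := ih y v x u rfl rfl (by omega)
    exact ⟨w, hu, hv⟩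
  | trans _ c _ hac _ ih₁ ih₂ =>
    rintro x u y v rfl rfl hu
    have hc : c.length = u.length + 1 := by simpa using (ComplementEqv.length_eq hf hac).symm
    obtain ⟨z, m, rfl⟩ : ∃ z m, c = z :: m := List.exists_cons_of_length_pos (by omega)
    have hm : m.length = u.length := by simpa using hc
    obtain ⟨p, hup, hmp⟩ := ih₁ x u z m rfl rfl hu
    obtain ⟨q, hmq, hvq⟩ := ih₂ z m y v rfl rfl (by omega)
    have hl : (f z x ++ p).length ≤ n := by
      rw [← ComplementEqv.length_eq hf hmp]
      omega
    obtain ⟨w, hpw, hqw⟩ := hn.cube hf hcube x y z hl (hmp.symm.trans hmq)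
    exact ⟨w, hup.trans hpw, hvq.trans hqw⟩

end FactorsThroughComplement

theorem factorsThroughComplement_of_cubeConditionAt (hf : IsHomogeneousComplement f)
    (hcube : ∀ n, FactorsThroughComplement f n → CubeConditionAt f n) (n : ℕ) :
    FactorsThroughComplement f n := by
  induction n with
  | zero => exact fun _ _ _ _ hu => absurd hu (Nat.not_lt_zero _)
  | succ n ih => exact ih.succ hf (hcube n ih)

theorem ComplementEqv.append_cancel_left (hf : IsHomogeneousComplement f)
    (hcube : ∀ n, FactorsThroughComplement f n → CubeConditionAt f n) {c p q : List α}
    (h : ComplementEqv f (c ++ p) (c ++ q)) : ComplementEqv f p q :=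
  (factorsThroughComplement_of_cubeConditionAt hf hcube _).append_cancel_left hf le_rfl h

theorem isLeftCancelMul_presentedMonoid (hf : IsHomogeneousComplement f)
    (hcube : ∀ n, FactorsThroughComplement f n → CubeConditionAt f n)
    {r : FreeMonoid α → FreeMonoid α → Prop}
    (hr : conGen r = conGen fun a b => ComplementRel f a.toList b.toList) :
    IsLeftCancelMul (PresentedMonoid r) where
  mul_left_cancel a b c := by
    induction a, b, c using PresentedMonoid.inductionOn₃ with
    | _ a b c =>
      simp only [← map_mul, PresentedMonoid.mk_eq_mk_iff, hr, conGen_iff_eqvGen_rewrite,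
        FreeMonoid.toList_mul]
      exact ComplementEqv.append_cancel_left hf hcube

end ComplementedPresentation

namespace EllipticD4Monoid

open ComplementedPresentation MulOpposite

abbrev τ (i : ℤ) : S := .inl i
abbrev σ (a : Fin 4) : S := .inr a

def complement : S → S → List S
  | .inl i, .inl j => if i = j then [] else [τ (i - 1)]
  | .inl i, .inr a => [σ a, τ i]
  | .inr a, .inl i => [τ i, σ a]
  | .inr a, .inr b => if a = b then [] else [σ b]

theorem isHomogeneousComplement_complement : IsHomogeneousComplement complement where
  self_eq_nil x := by cases x <;> simp [complement]
  length_comm x y := by cases x <;> cases y <;> simp [complement, apply_ite List.length, eq_comm]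

theorem conGen_rels_eq :
    conGen rels = conGen fun a b => ComplementRel complement a.toList b.toList := by
  apply le_antisymm
  · rw [Con.conGen_le]
    rintro a b (⟨i, j, rfl, rfl⟩ | ⟨i, j, hij, rfl, rfl⟩ | ⟨i, j, rfl, rfl⟩)
    · exact .of _ _ ⟨τ i, σ j, rfl, rfl⟩
    · exact .of _ _ ⟨σ i, σ j, by simp [complement, hij, s], by simp [complement, hij.symm, s]⟩
    · obtain rfl | hij := eq_or_ne i j
      · exact (conGen _).refl _
      · exact .of _ _ ⟨τ i, τ j, by simp [complement, hij, t], by simp [complement, hij.symm, t]⟩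
  · rw [Con.conGen_le]
    rintro a b ⟨x, y, ha, hb⟩
    rw [← FreeMonoid.ofList_toList a, ← FreeMonoid.ofList_toList b, ha, hb]
    rcases x with i | a <;> rcases y with j | b
    · obtain rfl | hij := eq_or_ne i j
      · exact (conGen _).refl _
      · simp only [complement, if_neg hij, if_neg hij.symm]
        exact .of _ _ (Or.inr (Or.inr ⟨i, j, rfl, rfl⟩))
    · exact .of _ _ (Or.inl ⟨i, b, rfl, rfl⟩)
    · exact (conGen _).symm (.of _ _ (Or.inl ⟨j, a, rfl, rfl⟩))
    · obtain rfl | hab := eq_or_ne a b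
      · exact (conGen _).refl _
      · simp only [complement, if_neg hab, if_neg hab.symm]
        exact .of _ _ (Or.inr (Or.inl ⟨a, b, hab, rfl, rfl⟩))

local infix:50 " ≋ " => ComplementEqv complement

theorem length_eq_of_eqv {a b : List S} (h : a ≋ b) : a.length = b.length :=
  h.length_eq isHomogeneousComplement_complement

theorem braid (p q : List S) (i : ℤ) (a : Fin 4) :
    p ++ τ i :: σ a :: τ i :: q ≋ p ++ σ a :: τ i :: σ a :: q :=
  .of_rewrite ⟨p, _, _, q, ⟨τ i, σ a, rfl, rfl⟩, by simp [complement], by simp [complement]⟩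

theorem comm (p q : List S) {a b : Fin 4} (hab : a ≠ b) :
    p ++ σ a :: σ b :: q ≋ p ++ σ b :: σ a :: q :=
  .of_rewrite ⟨p, _, _, q, ⟨σ a, σ b, rfl, rfl⟩, by simp [complement, hab],
    by simp [complement, hab.symm]⟩

theorem delta (p q : List S) (i j : ℤ) :
    p ++ τ i :: τ (i - 1) :: q ≋ p ++ τ j :: τ (j - 1) :: q := by
  obtain rfl | hij := eq_or_ne i j
  · exact .refl _
  · exact .of_rewrite ⟨p, _, _, q, ⟨τ i, τ j, rfl, rfl⟩, by simp [complement, hij],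
      by simp [complement, hij.symm]⟩

theorem tau_sigma_sigma_tau_sigma (i : ℤ) {a b : Fin 4} (hab : a ≠ b) (r : List S) :
    τ i :: σ a :: σ b :: τ i :: σ a :: r ≋ σ b :: τ i :: σ a :: σ b :: τ i :: r := calc
  _ ≋ τ i :: σ b :: σ a :: τ i :: σ a :: r := comm [τ i] _ hab
  _ ≋ τ i :: σ b :: τ i :: σ a :: τ i :: r := (braid [τ i, σ b] r i a).symm
  _ ≋ σ b :: τ i :: σ b :: σ a :: τ i :: r := braid [] _ i b
  _ ≋ σ b :: τ i :: σ a :: σ b :: τ i :: r := comm [σ b, τ i] _ hab.symm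

theorem sigma_tau_tau_sigma_tau (i : ℤ) (a : Fin 4) (r : List S) :
    σ a :: τ i :: τ (i - 1) :: σ a :: τ (i - 1 - 1) :: r ≋
      τ (i - 1) :: σ a :: τ (i - 1) :: τ (i - 1 - 1) :: σ a :: r := calc
  _ ≋ σ a :: τ (i - 1) :: τ (i - 1 - 1) :: σ a :: τ (i - 1 - 1) :: r :=
      delta [σ a] _ i (i - 1)
  _ ≋ σ a :: τ (i - 1) :: σ a :: τ (i - 1 - 1) :: σ a :: r := braid [σ a, τ (i - 1)] r _ a
  _ ≋ τ (i - 1) :: σ a :: τ (i - 1) :: τ (i - 1 - 1) :: σ a :: r :=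
      (braid [] _ (i - 1) a).symm

section Cube

variable {n : ℕ} {p q : List S}

theorem exists_of_sigma_sigma (hn : FactorsThroughComplement complement n) {a b : Fin 4}
    (hab : a ≠ b) (hp : p.length < n) (h : σ a :: p ≋ σ b :: q) :
    ∃ w, p ≋ σ b :: w ∧ q ≋ σ a :: w := by
  simpa [complement, hab, hab.symm] using hn _ _ p q hp h

theorem exists_of_tau_sigma (hn : FactorsThroughComplement complement n) {i : ℤ} {a : Fin 4}
    (hp : p.length < n) (h : τ i :: p ≋ σ a :: q) :
    ∃ w, p ≋ σ a :: τ i :: w ∧ q ≋ τ i :: σ a :: w := by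
  simpa [complement] using hn _ _ p q hp h

theorem exists_of_sigma_tau (hn : FactorsThroughComplement complement n) {i : ℤ} {a : Fin 4}
    (hp : p.length < n) (h : σ a :: p ≋ τ i :: q) :
    ∃ w, p ≋ τ i :: σ a :: w ∧ q ≋ σ a :: τ i :: w := by
  simpa [complement] using hn _ _ p q hp h

theorem exists_of_tau_tau (hn : FactorsThroughComplement complement n) {i j : ℤ} (hij : i ≠ j)
    (hp : p.length < n) (h : τ i :: p ≋ τ j :: q) :
    ∃ w, p ≋ τ (i - 1) :: w ∧ q ≋ τ (j - 1) :: w := by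
  simpa [complement, hij, hij.symm] using hn _ _ p q hp h

theorem cons_cancel (hn : FactorsThroughComplement complement n) {x : S} (hp : p.length < n)
    (h : x :: p ≋ x :: q) : p ≋ q :=
  hn.cons_cancel isHomogeneousComplement_complement hp h

/-! In `cube_xyz` the letters `x`, `y`, `z` of the cube condition are of the types indicated. -/

theorem cube_sss (hn : FactorsThroughComplement complement n) {a b c : Fin 4} (hab : a ≠ b)
    (hca : c ≠ a) (hcb : c ≠ b) (hp : p.length < n) (h : σ a :: p ≋ σ b :: q) :
    ∃ w, σ c :: p ≋ σ b :: w ∧ σ c :: q ≋ σ a :: w := by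
  obtain ⟨r, hpr, hqr⟩ := exists_of_sigma_sigma hn hab hp h
  exact ⟨σ c :: r, (hpr.cons _).trans (comm [] r hcb), (hqr.cons _).trans (comm [] r hca)⟩

theorem cube_sst (hn : FactorsThroughComplement complement n) {a b : Fin 4} (hab : a ≠ b) (k : ℤ)
    (hp : p.length + 2 ≤ n) (h : σ a :: τ k :: p ≋ σ b :: τ k :: q) :
    ∃ w, τ k :: σ a :: p ≋ σ b :: w ∧ τ k :: σ b :: q ≋ σ a :: w := by
  have hpq : p.length = q.length := by simpa using length_eq_of_eqv h
  obtain ⟨r, hpr, hqr⟩ := exists_of_sigma_sigma hn hab (by simp only [List.length_cons]; omega) h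
  obtain ⟨r₁, hp₁, hr₁⟩ := exists_of_tau_sigma hn (by omega) hpr
  obtain ⟨r₂, hq₂, hr₂⟩ := exists_of_tau_sigma hn (by omega) (hqr.trans (hr₁.cons _))
  have hl₁ : p.length = r₁.length + 2 := by simpa using length_eq_of_eqv hp₁
  obtain ⟨w, hw₁, hw₂⟩ :=
    exists_of_sigma_sigma hn hab.symm (by omega) (cons_cancel hn (by simp only [List.length_cons]; omega) hr₂)
  refine ⟨τ k :: σ a :: σ b :: τ k :: w, ?_, ?_⟩
  · calc τ k :: σ a :: p
      _ ≋ τ k :: σ a :: σ b :: τ k :: σ a :: w :=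
          (hp₁.trans (hw₁.append_left [σ b, τ k])).append_left [τ k, σ a]
      _ ≋ _ := tau_sigma_sigma_tau_sigma k hab w
  · calc τ k :: σ b :: q
      _ ≋ τ k :: σ b :: σ a :: τ k :: σ b :: w :=
          (hq₂.trans (hw₂.append_left [σ a, τ k])).append_left [τ k, σ b]
      _ ≋ σ a :: τ k :: σ b :: σ a :: τ k :: w := tau_sigma_sigma_tau_sigma k hab.symm w
      _ ≋ _ := comm [σ a, τ k] _ hab.symm

theorem cube_sts (hn : FactorsThroughComplement complement n) {a b : Fin 4} (hab : a ≠ b) (i : ℤ)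
    (hp : p.length + 1 ≤ n) (h : σ a :: p ≋ τ i :: σ b :: q) :
    ∃ w, σ b :: p ≋ τ i :: σ a :: w ∧ σ b :: τ i :: q ≋ σ a :: τ i :: w := by
  have hpq : p.length = q.length + 1 := by simpa using length_eq_of_eqv h
  obtain ⟨r, hpr, hqr⟩ := exists_of_sigma_tau hn (by omega) h
  obtain ⟨r₁, hq₁, hr₁⟩ := exists_of_sigma_sigma hn hab.symm (by omega) hqr
  have hpr' : p.length = r.length + 2 := by simpa using length_eq_of_eqv hpr
  obtain ⟨w, hrw, hr₁w⟩ := exists_of_tau_sigma hn (by omega) hr₁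
  refine ⟨σ b :: τ i :: σ a :: w, ?_, ?_⟩
  · calc σ b :: p
      _ ≋ σ b :: τ i :: σ a :: σ b :: τ i :: w := (hpr.trans (hrw.append_left [τ i, σ a])).cons _
      _ ≋ _ := (tau_sigma_sigma_tau_sigma i hab w).symm
  · calc σ b :: τ i :: q
      _ ≋ σ b :: τ i :: σ a :: τ i :: σ b :: w := (hq₁.trans (hr₁w.cons _)).append_left [σ b, τ i]
      _ ≋ σ b :: σ a :: τ i :: σ a :: σ b :: w := braid [σ b] _ i a
      _ ≋ σ a :: σ b :: τ i :: σ a :: σ b :: w := comm [] _ hab.symm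
      _ ≋ σ a :: σ b :: τ i :: σ b :: σ a :: w := comm [σ a, σ b, τ i] w hab
      _ ≋ _ := (braid [σ a] _ i b).symm

theorem cube_stt (hn : FactorsThroughComplement complement n) (a : Fin 4) (i j : ℤ)
    (hp : p.length + 2 ≤ n) (h : σ a :: τ j :: p ≋ τ (j - 1) :: q) :
    ∃ w, τ j :: σ a :: p ≋ τ i :: σ a :: w ∧ τ (i - 1) :: q ≋ σ a :: τ i :: w := by
  obtain ⟨r, hpr, hqr⟩ := exists_of_sigma_tau hn (by simp only [List.length_cons]; omega) h
  obtain ⟨r₁, hp₁, hr₁⟩ := exists_of_tau_tau hn (by omega : j ≠ j - 1) (by omega) hpr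
  have hpr' : p.length = r.length + 1 := by simpa using length_eq_of_eqv hpr
  obtain ⟨w, hrw, hr₁w⟩ := exists_of_sigma_tau hn (by omega) hr₁
  refine ⟨τ (i - 1) :: σ a :: τ (i - 1 - 1) :: w, ?_, ?_⟩
  · calc τ j :: σ a :: p
      _ ≋ τ j :: σ a :: τ (j - 1) :: σ a :: τ (j - 1 - 1) :: w :=
          (hp₁.trans (hr₁w.cons _)).append_left [τ j, σ a]
      _ ≋ τ j :: τ (j - 1) :: σ a :: τ (j - 1) :: τ (j - 1 - 1) :: w :=
          (braid [τ j] _ (j - 1) a).symm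
      _ ≋ τ i :: τ (i - 1) :: σ a :: τ (j - 1) :: τ (j - 1 - 1) :: w := delta [] _ j i
      _ ≋ τ i :: τ (i - 1) :: σ a :: τ (i - 1) :: τ (i - 1 - 1) :: w :=
          delta [τ i, τ (i - 1), σ a] w (j - 1) (i - 1)
      _ ≋ _ := braid [τ i] _ (i - 1) a
  · calc τ (i - 1) :: q
      _ ≋ τ (i - 1) :: σ a :: τ (j - 1) :: τ (j - 1 - 1) :: σ a :: w :=
          (hqr.trans (hrw.append_left [σ a, τ (j - 1)])).cons _
      _ ≋ τ (i - 1) :: σ a :: τ (i - 1) :: τ (i - 1 - 1) :: σ a :: w :=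
          delta [τ (i - 1), σ a] _ (j - 1) (i - 1)
      _ ≋ σ a :: τ (i - 1) :: σ a :: τ (i - 1 - 1) :: σ a :: w := braid [] _ (i - 1) a
      _ ≋ σ a :: τ (i - 1) :: τ (i - 1 - 1) :: σ a :: τ (i - 1 - 1) :: w :=
          (braid [σ a, τ (i - 1)] w (i - 1 - 1) a).symm
      _ ≋ _ := delta [σ a] _ (i - 1) i

theorem cube_tts (hn : FactorsThroughComplement complement n) {i j : ℤ} (hij : i ≠ j) (a : Fin 4)
    (hp : p.length + 2 ≤ n) (h : τ i :: σ a :: p ≋ τ j :: σ a :: q) :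
    ∃ w, σ a :: τ i :: p ≋ τ (i - 1) :: w ∧ σ a :: τ j :: q ≋ τ (j - 1) :: w := by
  have hpq : p.length = q.length := by simpa using length_eq_of_eqv h
  obtain ⟨r, hpr, hqr⟩ := exists_of_tau_tau hn hij (by simp only [List.length_cons]; omega) h
  obtain ⟨r₁, hp₁, hr₁⟩ := exists_of_sigma_tau hn (by omega) hpr
  obtain ⟨r₂, hq₂, hr₂⟩ := exists_of_sigma_tau hn (by omega) (hqr.trans (hr₁.cons _))
  have hpr₁ : p.length = r₁.length + 2 := by simpa using length_eq_of_eqv hp₁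
  obtain ⟨w, hw₁, hw₂⟩ :=
    exists_of_tau_tau hn (by omega : i - 1 ≠ j - 1) (by omega) (cons_cancel hn (by simp only [List.length_cons]; omega) hr₂)
  refine ⟨σ a :: τ (i - 1) :: τ (i - 1 - 1) :: σ a :: w, ?_, ?_⟩
  · calc σ a :: τ i :: p
      _ ≋ σ a :: τ i :: τ (i - 1) :: σ a :: τ (i - 1 - 1) :: w :=
          (hp₁.trans (hw₁.append_left [τ (i - 1), σ a])).append_left [σ a, τ i]
      _ ≋ _ := sigma_tau_tau_sigma_tau i a w
  · calc σ a :: τ j :: q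
      _ ≋ σ a :: τ j :: τ (j - 1) :: σ a :: τ (j - 1 - 1) :: w :=
          (hq₂.trans (hw₂.append_left [τ (j - 1), σ a])).append_left [σ a, τ j]
      _ ≋ τ (j - 1) :: σ a :: τ (j - 1) :: τ (j - 1 - 1) :: σ a :: w :=
          sigma_tau_tau_sigma_tau j a w
      _ ≋ _ := delta [τ (j - 1), σ a] _ (j - 1) (i - 1)

end Cube

theorem cubeConditionAt_complement (n : ℕ) (hn : FactorsThroughComplement complement n) :
    CubeConditionAt complement n := by
  intro x y z p q hxy hzx hzy hl h
  have hpq := length_eq_of_eqv h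
  have hyx := hxy.symm
  have hxz := hzx.symm
  have hyz := hzy.symm
  rcases x with i | a <;> rcases y with j | b <;> rcases z with k | c <;>
    simp only [ne_eq, Sum.inl.injEq, Sum.inr.injEq, reduceCtorEq, not_false_eq_true]
      at hxy hyx hzx hxz hzy hyz <;>
    simp only [complement, hxy, hyx, hzx, hxz, hzy, hyz, if_false, List.cons_append,
      List.nil_append, List.length_cons] at hl h hpq ⊢
  · exact ⟨p, .refl _, (cons_cancel hn (by omega) h).symm.cons _⟩
  · exact cube_tts hn hxy c (by omega) h
  · obtain ⟨w, hq, hp⟩ := cube_stt hn b i k (by omega) h.symm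
    exact ⟨w, hp, hq⟩
  · obtain ⟨w, hq, hp⟩ := cube_sts hn (Ne.symm hzy) i (by omega) h.symm
    exact ⟨w, hp, hq⟩
  · exact cube_stt hn a j k (by omega) h
  · exact cube_sts hn (Ne.symm hzx) j (by omega) h
  · exact cube_sst hn hxy k (by omega) h
  · exact cube_sss hn hxy hzx hzy (by omega) h

instance : IsLeftCancelMul M :=
  isLeftCancelMul_presentedMonoid isHomogeneousComplement_complement cubeConditionAt_complement
    conGen_rels_eq

theorem of_braid (i : ℤ) (j : Fin 4) :
    PresentedMonoid.of rels (τ i) * .of rels (σ j) * .of rels (τ i) =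
      PresentedMonoid.of rels (σ j) * .of rels (τ i) * .of rels (σ j) :=
  PresentedMonoid.mk_eq_mk_of_rel (Or.inl ⟨i, j, rfl, rfl⟩)

theorem of_comm {i j : Fin 4} (hij : i ≠ j) :
    PresentedMonoid.of rels (σ i) * .of rels (σ j) =
      PresentedMonoid.of rels (σ j) * .of rels (σ i) :=
  PresentedMonoid.mk_eq_mk_of_rel (Or.inr (Or.inl ⟨i, j, hij, rfl, rfl⟩))

theorem of_delta (i j : ℤ) :
    PresentedMonoid.of rels (τ i) * .of rels (τ (i - 1)) =
      PresentedMonoid.of rels (τ j) * .of rels (τ (j - 1)) :=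
  PresentedMonoid.mk_eq_mk_of_rel (Or.inr (Or.inr ⟨i, j, rfl, rfl⟩))

def reverse : M →* Mᵐᵒᵖ :=
  PresentedMonoid.lift (fun g => op (PresentedMonoid.of rels (g.map Neg.neg id))) <| by
    rintro a b (⟨i, j, rfl, rfl⟩ | ⟨i, j, hij, rfl, rfl⟩ | ⟨i, j, rfl, rfl⟩)
    · simpa [t, s, ← op_mul, mul_assoc] using congrArg op (of_braid (-i) j)
    · simpa [s, ← op_mul] using congrArg op (of_comm hij).symm
    · simpa [t, ← op_mul] using congrArg op (of_delta (1 - i) (1 - j))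

theorem reverse_reverse (x : M) : (reverse (reverse x).unop).unop = x := by
  suffices ((MulEquiv.opOp M).symm : Mᵐᵒᵖᵐᵒᵖ →* M).comp ((MonoidHom.op reverse).comp reverse) =
      MonoidHom.id M from DFunLike.congr_fun this x
  ext g
  rcases g with i | a <;> simp [reverse]

theorem reverse_injective : Function.Injective reverse :=
  Function.LeftInverse.injective (g := fun y : Mᵐᵒᵖ => (reverse y.unop).unop) reverse_reverse

instance : IsRightCancelMul M :=
  reverse_injective.isRightCancelMul reverse (map_mul reverse)

theorem cancellative :
    ∀ u v w : M, (u * v = u * w → v = w) ∧ (v * u = w * u → v = w) :=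
  fun _ _ _ => ⟨(mul_left_cancel ·), (mul_right_cancel ·)⟩

end EllipticD4Monoid
end

section
/- The elliptic Artin monoid M'(Ẽ₆^{(1,1)}) is cancellative: for all elements u, v, w of M'(Ẽ₆^{(1,1)}), u·v = u·w implies v = w, and v·u = w·u implies v = w. -/
/-!
For letters `x ≠ y` the presentation has exactly one relation of the form `x ⬝ c x y = y ⬝ c y x`
(for two `t`'s: `tᵢ ⬝ tᵢ₋₁ = tⱼ ⬝ tⱼ₋₁`), and all relations preserve length: it is complemented in
Dehornoy's sense. By induction on length, `x X = y Y` then forces `X = c x y ⬝ Z` and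
`Y = c y x ⬝ Z` for some `Z`; for `x = y` this is left cancellation. In the inductive step one
follows a chain of elementary rewrites from `x X` to `y Y`; a rewrite that changes the first letter
to some `w` is handled by the cube condition for `x, y, w`, which is checked triple by triple:
two letters either commute, braid, or are both `t`'s. Right cancellation follows by the
anti-automorphism that reverses words and sends `tᵢ` to `t₋ᵢ`.
-/

namespace EllipticE6Monoid

/-- Generators: `Sum.inl i` is `tᵢ` (`i ∈ ℤ`), `Sum.inr j` is `s_(j+1)`
(so `Sum.inr 0` is `s₁`, ..., `Sum.inr 5` is `s₆`). -/
abbrev S : Type := ℤ ⊕ Fin 6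

def t (i : ℤ) : FreeMonoid S := FreeMonoid.of (Sum.inl i)
def s (j : Fin 6) : FreeMonoid S := FreeMonoid.of (Sum.inr j)

/-- The pairs of (0-indexed) `s`-generators joined by an edge in the diagram,
i.e. satisfying a braid relation: (s₁,s₄), (s₂,s₅), (s₃,s₆). -/
def braidPairs : List (Fin 6 × Fin 6) := [(0, 3), (1, 4), (2, 5)]

/-- The defining relations of `M'(Ẽ₆^{(1,1)})`:
`tᵢsⱼtᵢ = sⱼtᵢsⱼ` for `i ∈ ℤ` and `j ∈ {1,2,3}`;
`tᵢtᵢ₋₁ = tⱼtⱼ₋₁` for all `i, j ∈ ℤ`;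
braid relations `xyx = yxy` along the edges of the `s`-part of the diagram;
commutation relations between the remaining pairs of distinct `s`-generators;
and commutation of every `tᵢ` with `s₄, …, s₆`. -/
def rels : FreeMonoid S → FreeMonoid S → Prop := fun a b =>
  (∃ i : ℤ, ∃ j : Fin 6, j.val < 3 ∧ a = t i * s j * t i ∧ b = s j * t i * s j) ∨
  (∃ i j : ℤ, a = t i * t (i - 1) ∧ b = t j * t (j - 1)) ∨
  (∃ q ∈ braidPairs, a = s q.1 * s q.2 * s q.1 ∧ b = s q.2 * s q.1 * s q.2) ∨
  (∃ i j : Fin 6, i ≠ j ∧ (i, j) ∉ braidPairs ∧ (j, i) ∉ braidPairs ∧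
    a = s i * s j ∧ b = s j * s i) ∨
  (∃ i : ℤ, ∃ j : Fin 6, 3 ≤ j.val ∧ a = t i * s j ∧ b = s j * t i)

/-- The elliptic Artin monoid `M'(Ẽ₆^{(1,1)})`. -/
abbrev M := PresentedMonoid rels

end EllipticE6Monoid

namespace FreeMonoid

open PresentedMonoid (mk mk_eq_mk_iff)

variable {α : Type*} {r : FreeMonoid α → FreeMonoid α → Prop} {c : α → α → FreeMonoid α} {L : ℕ}

lemma of_mul_inj {x y : α} {X Y : FreeMonoid α} (h : of x * X = of y * Y) : x = y ∧ X = Y := by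
  simpa using congrArg toList h

lemma length_lt_of_mul_lt {p u : FreeMonoid α} (h : (p * u).length < L) :
    u.length < L := by
  rw [length_mul] at h
  omega

def Rewrite (r : FreeMonoid α → FreeMonoid α → Prop) (u v : FreeMonoid α) : Prop :=
  ∃ p q a b, (r a b ∨ r b a) ∧ u = p * a * q ∧ v = p * b * q

namespace Rewrite

lemma symm {u v : FreeMonoid α} (h : Rewrite r u v) : Rewrite r v u := by
  obtain ⟨p, q, a, b, hab, rfl, rfl⟩ := h
  exact ⟨p, q, b, a, hab.symm, rfl, rfl⟩

lemma mul_left (w : FreeMonoid α) {u v : FreeMonoid α} (h : Rewrite r u v) :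
    Rewrite r (w * u) (w * v) := by
  obtain ⟨p, q, a, b, hab, rfl, rfl⟩ := h
  exact ⟨w * p, q, a, b, hab, by simp only [mul_assoc], by simp only [mul_assoc]⟩

lemma mul_right (w : FreeMonoid α) {u v : FreeMonoid α} (h : Rewrite r u v) :
    Rewrite r (u * w) (v * w) := by
  obtain ⟨p, q, a, b, hab, rfl, rfl⟩ := h
  exact ⟨p, q * w, a, b, hab, by simp only [mul_assoc], by simp only [mul_assoc]⟩

lemma mk_eq {u v : FreeMonoid α} (h : Rewrite r u v) : mk r u = mk r v := by
  obtain ⟨p, q, a, b, hab | hba, rfl, rfl⟩ := h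
  · simp only [map_mul, PresentedMonoid.mk_eq_mk_of_rel hab]
  · simp only [map_mul, PresentedMonoid.mk_eq_mk_of_rel hba]

instance : Std.Symm (Rewrite r) := ⟨fun _ _ => symm⟩

end Rewrite

lemma reflTransGen_rewrite_of_mk_eq {u v : FreeMonoid α} (h : mk r u = mk r v) :
    Relation.ReflTransGen (Rewrite r) u v := by
  rw [mk_eq_mk_iff] at h
  induction h with
  | of a b hab => exact .single ⟨1, 1, a, b, .inl hab, by simp, by simp⟩
  | refl => exact .refl
  | symm _ ih => exact Std.Symm.symm _ _ ih
  | trans _ _ ih₁ ih₂ => exact ih₁.trans ih₂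
  | mul _ _ ih₁ ih₂ =>
    exact (ih₁.lift _ fun _ _ => Rewrite.mul_right _).trans
      (ih₂.lift _ fun _ _ => Rewrite.mul_left _)

/-- A complemented presentation in the sense of Dehornoy, with length-preserving relations. -/
structure IsComplement (r : FreeMonoid α → FreeMonoid α → Prop) (c : α → α → FreeMonoid α) :
    Prop where intro ::
  self : ∀ x, c x x = 1
  length_comm : ∀ x y, (c x y).length = (c y x).length
  mk_of_mul : ∀ x y, mk r (of x * c x y) = mk r (of y * c y x)
  rel_cases : ∀ a b, r a b → a = b ∨ ∃ x y, a = of x * c x y ∧ b = of y * c y x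

/-- `x ⬝ c x y` is a least common right multiple of `x` and `y`, as far as words of length `< L`
can tell. -/
def LcmBelow (r : FreeMonoid α → FreeMonoid α → Prop) (c : α → α → FreeMonoid α) (L : ℕ) :
    Prop :=
  ∀ (x y : α) (X Y : FreeMonoid α), (of x * X).length < L → mk r (of x * X) = mk r (of y * Y) →
    ∃ Z, mk r X = mk r (c x y * Z) ∧ mk r Y = mk r (c y x * Z)

/-- The cube condition on `x, y, w`, in the form needed by `LcmBelow.succ` when a rewrite has
replaced the first letter `x` of a word by `w`. -/
def CubeAt (r : FreeMonoid α → FreeMonoid α → Prop) (c : α → α → FreeMonoid α) (L : ℕ)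
    (x y w : α) : Prop :=
  ∀ q Z₁, (c w x * q).length < L → mk r (c w x * q) = mk r (c w y * Z₁) →
    ∃ Z, mk r (c x w * q) = mk r (c x y * Z) ∧ mk r (c y w * Z₁) = mk r (c y x * Z)

namespace IsComplement

lemma length_eq_of_rewrite (hc : IsComplement r c) {u v : FreeMonoid α} (h : Rewrite r u v) :
    u.length = v.length := by
  obtain ⟨p, q, a, b, hab, rfl, rfl⟩ := h
  have hr : ∀ a b, r a b → a.length = b.length := fun a b hab => by
    rcases hc.rel_cases a b hab with rfl | ⟨x, y, rfl, rfl⟩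
    · rfl
    · simp only [length_mul, length_of, hc.length_comm x y]
  simp only [length_mul, hab.elim (hr a b) (fun h => (hr b a h).symm)]

lemma length_eq (hc : IsComplement r c) {u v : FreeMonoid α} (h : mk r u = mk r v) :
    u.length = v.length := by
  have hch := reflTransGen_rewrite_of_mk_eq h
  clear h
  induction hch with
  | refl => rfl
  | tail _ hstep ih => exact ih.trans (hc.length_eq_of_rewrite hstep)

lemma rewrite_of_mul (hc : IsComplement r c) {x : α} {X v : FreeMonoid α}
    (h : Rewrite r (of x * X) v) :
    (∃ X', mk r X = mk r X' ∧ v = of x * X') ∨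
      ∃ w q, x ≠ w ∧ X = c x w * q ∧ v = of w * (c w x * q) := by
  obtain ⟨p, q, a, b, hab, hu, rfl⟩ := h
  cases p with
  | of_mul d p =>
    simp only [mul_assoc] at hu
    obtain ⟨rfl, rfl⟩ := of_mul_inj hu
    exact .inl ⟨p * (b * q), Rewrite.mk_eq ⟨p, q, a, b, hab, by rw [mul_assoc], by rw [mul_assoc]⟩,
      by simp only [mul_assoc]⟩
  | one =>
    rw [one_mul] at hu ⊢
    have hcases : a = b ∨ ∃ z w, a = of z * c z w ∧ b = of w * c w z := by
      rcases hab with hab | hba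
      · exact hc.rel_cases a b hab
      · rcases hc.rel_cases b a hba with h | ⟨z, w, hb, ha⟩
        · exact .inl h.symm
        · exact .inr ⟨w, z, ha, hb⟩
    rcases hcases with rfl | ⟨z, w, rfl, rfl⟩
    · exact .inl ⟨X, rfl, hu.symm⟩
    · obtain ⟨rfl, rfl⟩ := of_mul_inj (hu.trans (mul_assoc _ _ _))
      by_cases hxw : x = w
      · subst hxw
        exact .inl ⟨_, rfl, by rw [mul_assoc]⟩
      · exact .inr ⟨w, q, hxw, rfl, by rw [mul_assoc]⟩

end IsComplement

namespace LcmBelow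

lemma cancel_of (hL : LcmBelow r c L) (hc : IsComplement r c) {x : α} {u v : FreeMonoid α}
    (hlen : (of x * u).length < L) (h : mk r (of x * u) = mk r (of x * v)) : mk r u = mk r v := by
  obtain ⟨Z, hu, hv⟩ := hL x x u v hlen h
  rw [hc.self, one_mul] at hu hv
  exact hu.trans hv.symm

lemma cancel (hL : LcmBelow r c L) (hc : IsComplement r c) (p : FreeMonoid α)
    {u v : FreeMonoid α} (hlen : (p * u).length < L) (h : mk r (p * u) = mk r (p * v)) :
    mk r u = mk r v := by
  induction p using FreeMonoid.inductionOn' with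
  | one => simpa using h
  | of_mul d p ih =>
    simp only [mul_assoc] at hlen h
    exact ih (by simp only [length_mul, length_of] at hlen ⊢; omega) (hL.cancel_of hc hlen h)

end LcmBelow

lemma IsComplement.cubeAt_swap (hc : IsComplement r c) {x y w : α}
    (h : CubeAt r c L x y w) : CubeAt r c L y x w := by
  intro q Z₁ hlen H
  obtain ⟨Z, h₁, h₂⟩ := h Z₁ q (hc.length_eq H ▸ hlen) H.symm
  exact ⟨Z, h₂, h₁⟩

theorem LcmBelow.succ (hL : LcmBelow r c L) (hc : IsComplement r c)
    (hcube : ∀ x y w, x ≠ y → x ≠ w → y ≠ w → CubeAt r c L x y w) :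
    LcmBelow r c (L + 1) := by
  intro x y X Y hlen h
  suffices ∀ u, Relation.ReflTransGen (Rewrite r) u (of y * Y) → ∀ x X, u = of x * X →
      u.length ≤ L → ∃ Z, mk r X = mk r (c x y * Z) ∧ mk r Y = mk r (c y x * Z) from
    this _ (reflTransGen_rewrite_of_mk_eq h) x X rfl (by omega)
  intro u hu
  induction hu using Relation.ReflTransGen.head_induction_on with
  | refl =>
    rintro x X hx -
    obtain ⟨rfl, rfl⟩ := of_mul_inj hx.symm
    exact ⟨X, by rw [hc.self, one_mul], by rw [hc.self, one_mul]⟩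
  | head hstep _ ih =>
    rintro x X rfl hlen
    have hlen' := hc.length_eq_of_rewrite hstep
    rcases hc.rewrite_of_mul hstep with ⟨X', hX, rfl⟩ | ⟨w, q, hxw, rfl, rfl⟩
    · obtain ⟨Z, h₁, h₂⟩ := ih x X' rfl (hlen' ▸ hlen)
      exact ⟨Z, hX.trans h₁, h₂⟩
    obtain ⟨Z₁, h₁, h₂⟩ := ih w (c w x * q) rfl (hlen' ▸ hlen)
    have hlt : (c w x * q).length < L := by
      simp only [length_mul, length_of] at hlen hlen' ⊢
      omega
    by_cases hwy : w = y
    · subst hwy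
      rw [hc.self, one_mul] at h₁ h₂
      exact ⟨q, rfl, h₂.trans h₁.symm⟩
    by_cases hxy : x = y
    · subst hxy
      refine ⟨c x w * q, by rw [hc.self, one_mul], ?_⟩
      rw [hc.self, one_mul, h₂, map_mul, map_mul, hL.cancel hc _ hlt h₁]
    obtain ⟨Z, g₁, g₂⟩ := hcube x y w hxy hxw (Ne.symm hwy) q Z₁ hlt h₁
    exact ⟨Z, g₁, h₂.trans g₂⟩

def CubeCondition (r : FreeMonoid α → FreeMonoid α → Prop) (c : α → α → FreeMonoid α) : Prop :=
  ∀ L, LcmBelow r c L → ∀ x y w, x ≠ y → x ≠ w → y ≠ w → CubeAt r c L x y w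

theorem IsComplement.lcmBelow (hc : IsComplement r c) (hcube : CubeCondition r c) :
    ∀ L, LcmBelow r c L
  | 0 => fun _ _ _ _ h => absurd h (Nat.not_lt_zero _)
  | L + 1 => (hc.lcmBelow hcube L).succ hc (hcube L (hc.lcmBelow hcube L))

theorem IsComplement.isLeftCancelMul (hc : IsComplement r c) (hcube : CubeCondition r c) :
    IsLeftCancelMul (PresentedMonoid r) where
  mul_left_cancel a b b' h := by
    induction a, b, b' using PresentedMonoid.inductionOn₃ with
    | _ p u v =>
      exact (hc.lcmBelow hcube _).cancel hc p (Nat.lt_succ_self _) (by simpa using h)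

theorem isRightCancelMul_of_antiInvolution [IsLeftCancelMul (PresentedMonoid r)]
    (θ : FreeMonoid α → FreeMonoid α) (hθ : Function.Involutive θ)
    (hmul : ∀ u v, θ (u * v) = θ v * θ u) (hrel : ∀ a b, r a b → mk r (θ a) = mk r (θ b)) :
    IsRightCancelMul (PresentedMonoid r) := by
  have hθr : ∀ {u v}, mk r u = mk r v → mk r (θ u) = mk r (θ v) := by
    intro u v h
    rw [mk_eq_mk_iff] at h
    induction h with
    | of a b hab => exact hrel a b hab
    | refl => rfl
    | symm _ ih => exact ih.symm
    | trans _ _ ih₁ ih₂ => exact ih₁.trans ih₂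
    | mul _ _ ih₁ ih₂ => rw [hmul, hmul, map_mul, map_mul, ih₁, ih₂]
  refine ⟨fun a b b' h => ?_⟩
  induction a, b, b' using PresentedMonoid.inductionOn₃ with
  | _ p u v =>
    have h' := hθr (u := u * p) (v := v * p) (by simpa using h)
    rw [hmul, hmul, map_mul, map_mul] at h'
    simpa [hθ u, hθ v] using hθr (mul_left_cancel h')

def Commuting (c : α → α → FreeMonoid α) (x y : α) : Prop := c x y = of y ∧ c y x = of x

def Braiding (c : α → α → FreeMonoid α) (x y : α) : Prop :=
  c x y = of y * of x ∧ c y x = of x * of y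

lemma Commuting.symm {x y : α} (h : Commuting c x y) : Commuting c y x := ⟨h.2, h.1⟩

lemma Braiding.symm {x y : α} (h : Braiding c x y) : Braiding c y x := ⟨h.2, h.1⟩

namespace IsComplement

lemma commute (hc : IsComplement r c) {x y : α} (h : Commuting c x y) :
    Commute (mk r (of x)) (mk r (of y)) := by
  have := hc.mk_of_mul x y
  rwa [h.1, h.2, map_mul, map_mul] at this

lemma braid (hc : IsComplement r c) {x y : α} (h : Braiding c x y) (z : PresentedMonoid r) :
    mk r (of x) * (mk r (of y) * (mk r (of x) * z)) =
      mk r (of y) * (mk r (of x) * (mk r (of y) * z)) := by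
  have := congrArg (· * z) (hc.mk_of_mul x y)
  simpa [h.1, h.2, mul_assoc] using this

end IsComplement

section Cube

variable {x y w : α}

lemma cubeAt_of_commuting_commuting (hL : LcmBelow r c L) (hxw : Commuting c x w)
    (hyw : Commuting c y w)
    (hxy : Commute (mk r (of w)) (mk r (c x y))) (hyx : Commute (mk r (of w)) (mk r (c y x))) :
    CubeAt r c L x y w := by
  intro q Z₁ hlen H
  rw [hxw.2] at H hlen
  rw [hyw.2] at H
  obtain ⟨Z₂, h₁, h₂⟩ := hL x y q Z₁ hlen H
  refine ⟨of w * Z₂, ?_, ?_⟩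
  · simp only [hxw.1, map_mul, h₁, hxy.left_comm]
  · simp only [hyw.1, map_mul, h₂, hyx.left_comm]

lemma cubeAt_comm_braid_comm (hL : LcmBelow r c L) (hc : IsComplement r c)
    (hxy : Commuting c x y) (hxw : Braiding c x w) (hyw : Commuting c y w) :
    CubeAt r c L x y w := by
  intro q Z₁ hlen H
  rw [hxw.2, mul_assoc] at H hlen
  rw [hyw.2] at H
  obtain ⟨Z₂, h₁, h₂⟩ := hL x y _ _ hlen H
  rw [hxy.1] at h₁
  rw [hxy.2] at h₂
  obtain ⟨Z₃, h₃, h₄⟩ := hL w y q Z₂ (length_lt_of_mul_lt hlen) h₁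
  rw [hyw.2] at h₃
  rw [hyw.1] at h₄
  refine ⟨of w * (of x * Z₃), ?_, ?_⟩
  · simp only [hxw.1, hxy.1, map_mul, h₃, mul_assoc, (hc.commute hyw).left_comm,
      (hc.commute hxy.symm).left_comm]
  · simp only [hyw.1, hxy.2, map_mul, h₂, h₄, hc.braid hxw]

lemma cubeAt_braid_braid_comm (hL : LcmBelow r c L) (hc : IsComplement r c)
    (hxy : Braiding c x y) (hxw : Braiding c x w) (hyw : Commuting c y w) :
    CubeAt r c L x y w := by
  intro q Z₁ hlen H
  rw [hxw.2, mul_assoc] at H hlen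
  rw [hyw.2] at H
  obtain ⟨Z₂, h₁, h₂⟩ := hL x y _ _ hlen H
  rw [hxy.1, mul_assoc] at h₁
  rw [hxy.2, mul_assoc] at h₂
  obtain ⟨Z₃, h₃, h₄⟩ := hL w y q _ (length_lt_of_mul_lt hlen) h₁
  rw [hyw.2] at h₃
  rw [hyw.1] at h₄
  have hlen' : (of x * Z₂).length < L := by
    have := hc.length_eq h₁
    simp only [length_mul, length_of] at hlen this ⊢
    omega
  obtain ⟨Z₄, h₅, h₆⟩ := hL x w _ _ hlen' h₄
  rw [hxw.1, mul_assoc] at h₅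
  rw [hxw.2, mul_assoc] at h₆
  refine ⟨of w * (of x * (of y * Z₄)), ?_, ?_⟩
  · simp only [hxw.1, hxy.1, map_mul, h₃, h₆, mul_assoc]
    rw [hc.braid hxy, hc.braid hxw]
    simp only [(hc.commute hyw).left_comm]
  · simp only [hyw.1, hxy.2, map_mul, h₂, h₅, mul_assoc]
    simp only [(hc.commute hyw).left_comm]
    rw [← hc.braid hxy, hc.braid hxw]

lemma cubeAt_comm_braid_braid (hL : LcmBelow r c L) (hc : IsComplement r c)
    (hxy : Commuting c x y) (hxw : Braiding c x w) (hyw : Braiding c y w) :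
    CubeAt r c L x y w := by
  intro q Z₁ hlen H
  rw [hxw.2, mul_assoc] at H hlen
  rw [hyw.2, mul_assoc] at H
  obtain ⟨Z₂, h₁, h₂⟩ := hL x y _ _ hlen H
  rw [hxy.1] at h₁
  rw [hxy.2] at h₂
  obtain ⟨Z₃, h₃, h₄⟩ := hL w y q Z₂ (length_lt_of_mul_lt hlen) h₁
  rw [hyw.2, mul_assoc] at h₃
  rw [hyw.1, mul_assoc] at h₄
  have hlenZ₁ : (of w * Z₁).length < L := hc.length_eq H ▸ hlen |> length_lt_of_mul_lt
  obtain ⟨Z₄, h₅, h₆⟩ := hL w x Z₁ (of w * (of y * Z₃)) hlenZ₁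
    (by rw [h₂, map_mul, h₄, ← map_mul])
  rw [hxw.2, mul_assoc] at h₅
  rw [hxw.1, mul_assoc] at h₆
  have hlenZ₃ : (of w * (of y * Z₃)).length < L := by
    have e₁ := hc.length_eq h₁
    have e₄ := hc.length_eq h₄
    simp only [length_mul, length_of] at hlen e₁ e₄ ⊢
    omega
  obtain ⟨Z₅, h₇, h₈⟩ := hL y x Z₃ Z₄ (length_lt_of_mul_lt hlenZ₃) (hL.cancel hc _ hlenZ₃ h₆)
  rw [hxy.2] at h₇
  rw [hxy.1] at h₈
  refine ⟨of w * (of y * (of x * (of w * Z₅))), ?_, ?_⟩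
  · simp only [hxw.1, hxy.1, map_mul, h₃, h₇, mul_assoc, (hc.commute hxy).left_comm,
      hc.braid hxw, hc.braid hyw]
  · simp only [hyw.1, hxy.2, map_mul, h₅, h₈, mul_assoc, (hc.commute hxy.symm).left_comm,
      hc.braid hxw, hc.braid hyw]

lemma cubeAt_of_commuting_or_braiding (hL : LcmBelow r c L) (hc : IsComplement r c)
    (hxy : Commuting c x y ∨ Braiding c x y) (hxw : Commuting c x w ∨ Braiding c x w)
    (hyw : Commuting c y w ∨ Braiding c y w)
    (hxyw : ¬ (Braiding c x y ∧ Braiding c x w ∧ Braiding c y w)) : CubeAt r c L x y w := by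
  have hwx := fun h : Commuting c x w => hc.commute h.symm
  have hwy := fun h : Commuting c y w => hc.commute h.symm
  rcases hxy with hxy | hxy <;> rcases hxw with hxw | hxw <;> rcases hyw with hyw | hyw
  · exact cubeAt_of_commuting_commuting hL hxw hyw (by rw [hxy.1]; exact hwy hyw)
      (by rw [hxy.2]; exact hwx hxw)
  · exact hc.cubeAt_swap (cubeAt_comm_braid_comm hL hc hxy.symm hyw hxw)
  · exact cubeAt_comm_braid_comm hL hc hxy hxw hyw
  · exact cubeAt_comm_braid_braid hL hc hxy hxw hyw
  · exact cubeAt_of_commuting_commuting hL hxw hyw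
      (by rw [hxy.1, map_mul]; exact (hwy hyw).mul_right (hwx hxw))
      (by rw [hxy.2, map_mul]; exact (hwx hxw).mul_right (hwy hyw))
  · exact hc.cubeAt_swap (cubeAt_braid_braid_comm hL hc hxy.symm hyw hxw)
  · exact cubeAt_braid_braid_comm hL hc hxy hxw hyw
  · exact absurd ⟨hxy, hxw, hyw⟩ hxyw

end Cube

end FreeMonoid

namespace EllipticE6Monoid

open FreeMonoid
open PresentedMonoid (mk mk_eq_mk_of_rel)

def Adjacent (a b : Fin 6) : Prop := (a, b) ∈ braidPairs ∨ (b, a) ∈ braidPairs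

instance : DecidableRel Adjacent := fun _ _ => inferInstanceAs (Decidable (_ ∨ _))

lemma Adjacent.symm {a b : Fin 6} (h : Adjacent a b) : Adjacent b a := Or.symm h

lemma Adjacent.ne {a b : Fin 6} (h : Adjacent a b) : a ≠ b := by
  revert a b h; decide

lemma Adjacent.unique {a b c : Fin 6} (hb : Adjacent a b) (hc : Adjacent a c) : b = c := by
  revert a b c; decide

lemma not_adjacent_of_lt {a b : Fin 6} (ha : a.val < 3) (hb : b.val < 3) : ¬Adjacent a b := by
  revert a b; decide

/-- The defining relation of `M` between letters `x ≠ y` is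
`x ⬝ complement x y = y ⬝ complement y x`. -/
def complement : S → S → FreeMonoid S
  | .inl i, .inl j => if i = j then 1 else t (i - 1)
  | .inl i, .inr b => if b.val < 3 then s b * t i else s b
  | .inr b, .inl i => if b.val < 3 then t i * s b else t i
  | .inr a, .inr b => if a = b then 1 else if Adjacent a b then s b * s a else s b

lemma adjacent_comm {a b : Fin 6} : Adjacent a b ↔ Adjacent b a := Or.comm

lemma commuting_or_braiding {x y : S} (hxy : x ≠ y) (h : ¬(x.isLeft ∧ y.isLeft)) :
    Commuting complement x y ∨ Braiding complement x y := by
  rcases x with i | a <;> rcases y with j | b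
  · simp at h
  · by_cases hb : b.val < 3 <;> simp [Commuting, Braiding, complement, t, s, hb]
  · by_cases ha : a.val < 3 <;> simp [Commuting, Braiding, complement, t, s, ha]
  · have hab : a ≠ b := fun h => hxy (h ▸ rfl)
    by_cases hadj : Adjacent a b <;>
      simp [Commuting, Braiding, complement, s, hab, hab.symm, hadj, adjacent_comm]

lemma braiding_inl_inr_iff {i : ℤ} {b : Fin 6} :
    Braiding complement (.inl i) (.inr b) ↔ b.val < 3 := by
  simp [Braiding, complement, t, s]

lemma braiding_inr_inr_iff {a b : Fin 6} (hab : a ≠ b) :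
    Braiding complement (.inr a) (.inr b) ↔ Adjacent a b := by
  by_cases hadj : Adjacent a b <;>
    simp [Braiding, complement, s, hab, hab.symm, hadj, adjacent_comm]

lemma not_braiding_triangle {x y w : S} (hxy : x ≠ y) (hxw : x ≠ w) (hyw : y ≠ w)
    (h₁ : ¬(x.isLeft ∧ y.isLeft)) (h₂ : ¬(x.isLeft ∧ w.isLeft)) (h₃ : ¬(y.isLeft ∧ w.isLeft)) :
    ¬(Braiding complement x y ∧ Braiding complement x w ∧ Braiding complement y w) := by
  rintro ⟨bxy, bxw, byw⟩
  rcases x with i | a <;> rcases y with j | b <;> rcases w with k | c <;> simp at h₁ h₂ h₃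
  · exact not_adjacent_of_lt (braiding_inl_inr_iff.1 bxy) (braiding_inl_inr_iff.1 bxw)
      ((braiding_inr_inr_iff (by simpa using hyw)).1 byw)
  · exact not_adjacent_of_lt (braiding_inl_inr_iff.1 bxy.symm) (braiding_inl_inr_iff.1 byw)
      ((braiding_inr_inr_iff (by simpa using hxw)).1 bxw)
  · exact not_adjacent_of_lt (braiding_inl_inr_iff.1 bxw.symm) (braiding_inl_inr_iff.1 byw.symm)
      ((braiding_inr_inr_iff (by simpa using hxy)).1 bxy)
  · have hbc : b ≠ c := by simpa using hyw
    exact hbc (((braiding_inr_inr_iff (by simpa using hxy)).1 bxy).unique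
      ((braiding_inr_inr_iff (by simpa using hxw)).1 bxw))

lemma complement_inl_inl {i j : ℤ} (h : i ≠ j) : complement (.inl i) (.inl j) = t (i - 1) := by
  simp [complement, h]

lemma complement_inl_inr_of_lt (i : ℤ) {b : Fin 6} (hb : b.val < 3) :
    complement (.inl i) (.inr b) = s b * t i := by
  simp [complement, hb]

lemma complement_inr_inl_of_lt (i : ℤ) {b : Fin 6} (hb : b.val < 3) :
    complement (.inr b) (.inl i) = t i * s b := by
  simp [complement, hb]

lemma complement_inl_inr_of_le (i : ℤ) {b : Fin 6} (hb : 3 ≤ b.val) :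
    complement (.inl i) (.inr b) = s b := by
  simp [complement, Nat.not_lt.2 hb]

lemma complement_inr_inl_of_le (i : ℤ) {b : Fin 6} (hb : 3 ≤ b.val) :
    complement (.inr b) (.inl i) = t i := by
  simp [complement, Nat.not_lt.2 hb]

lemma mk_t_mul_t (i j : ℤ) : mk rels (t i * t (i - 1)) = mk rels (t j * t (j - 1)) :=
  mk_eq_mk_of_rel (.inr (.inl ⟨i, j, rfl, rfl⟩))

lemma mk_t_braid_s (i : ℤ) {b : Fin 6} (hb : b.val < 3) :
    mk rels (t i * s b * t i) = mk rels (s b * t i * s b) :=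
  mk_eq_mk_of_rel (.inl ⟨i, b, hb, rfl, rfl⟩)

lemma mk_t_mul_s (i : ℤ) {b : Fin 6} (hb : 3 ≤ b.val) : mk rels (t i * s b) = mk rels (s b * t i) :=
  mk_eq_mk_of_rel (.inr (.inr (.inr (.inr ⟨i, b, hb, rfl, rfl⟩))))

lemma mk_s_braid_s {a b : Fin 6} (h : Adjacent a b) :
    mk rels (s a * s b * s a) = mk rels (s b * s a * s b) := by
  rcases h with h | h
  · exact mk_eq_mk_of_rel (.inr (.inr (.inl ⟨(a, b), h, rfl, rfl⟩)))
  · exact (mk_eq_mk_of_rel (.inr (.inr (.inl ⟨(b, a), h, rfl, rfl⟩)))).symm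

lemma mk_s_mul_s {a b : Fin 6} (hab : a ≠ b) (h : ¬Adjacent a b) :
    mk rels (s a * s b) = mk rels (s b * s a) :=
  mk_eq_mk_of_rel (.inr (.inr (.inr (.inl ⟨a, b, hab, fun h' => h (.inl h'), fun h' => h (.inr h'),
    rfl, rfl⟩))))

lemma mk_of_mul_complement (x y : S) :
    mk rels (of x * complement x y) = mk rels (of y * complement y x) := by
  have hts (i : ℤ) (b : Fin 6) : mk rels (of (.inl i) * complement (.inl i) (.inr b)) =
      mk rels (of (.inr b) * complement (.inr b) (.inl i)) := by
    rcases lt_or_ge b.val 3 with hb | hb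
    · rw [complement_inl_inr_of_lt i hb, complement_inr_inl_of_lt i hb, ← mul_assoc, ← mul_assoc]
      exact mk_t_braid_s i hb
    · rw [complement_inl_inr_of_le i hb, complement_inr_inl_of_le i hb]
      exact mk_t_mul_s i hb
  rcases x with i | a <;> rcases y with j | b
  · by_cases hij : i = j
    · rw [hij]
    rw [complement_inl_inl hij, complement_inl_inl (Ne.symm hij)]
    exact mk_t_mul_t i j
  · exact hts i b
  · exact (hts j a).symm
  · by_cases hab : a = b
    · rw [hab]
    by_cases hadj : Adjacent a b
    · simp only [complement, if_neg hab, if_neg (Ne.symm hab), if_pos hadj, if_pos hadj.symm,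
        ← mul_assoc]
      exact mk_s_braid_s hadj
    · simp only [complement, if_neg hab, if_neg (Ne.symm hab), if_neg hadj,
        if_neg (mt Adjacent.symm hadj)]
      exact mk_s_mul_s hab hadj

lemma eq_or_complement_of_rels {u v : FreeMonoid S} (h : rels u v) :
    u = v ∨ ∃ x y, u = of x * complement x y ∧ v = of y * complement y x := by
  rcases h with ⟨i, b, hb, rfl, rfl⟩ | ⟨i, j, rfl, rfl⟩ | ⟨⟨a, b⟩, hab, rfl, rfl⟩ |
    ⟨a, b, hab, h₁, h₂, rfl, rfl⟩ | ⟨i, b, hb, rfl, rfl⟩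
  · refine .inr ⟨.inl i, .inr b, ?_, ?_⟩
    · rw [complement_inl_inr_of_lt i hb, ← mul_assoc]; rfl
    · rw [complement_inr_inl_of_lt i hb, ← mul_assoc]; rfl
  · by_cases hij : i = j
    · exact .inl (by rw [hij])
    refine .inr ⟨.inl i, .inl j, ?_, ?_⟩
    · rw [complement_inl_inl hij]; rfl
    · rw [complement_inl_inl (Ne.symm hij)]; rfl
  · have hadj : Adjacent a b := .inl hab
    refine .inr ⟨.inr a, .inr b, ?_, ?_⟩
    · simp only [complement, if_neg hadj.ne, if_pos hadj, ← mul_assoc]; rfl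
    · simp only [complement, if_neg hadj.ne.symm, if_pos hadj.symm, ← mul_assoc]; rfl
  · have hadj : ¬Adjacent a b := fun h => h.elim h₁ h₂
    refine .inr ⟨.inr a, .inr b, ?_, ?_⟩
    · simp only [complement, if_neg hab, if_neg hadj]; rfl
    · simp only [complement, if_neg (Ne.symm hab), if_neg (mt Adjacent.symm hadj)]; rfl
  · refine .inr ⟨.inl i, .inr b, ?_, ?_⟩
    · rw [complement_inl_inr_of_le i hb]; rfl
    · rw [complement_inr_inl_of_le i hb]; rfl

theorem isComplement : IsComplement rels complement where
  self x := by rcases x with i | a <;> simp [complement]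
  length_comm x y := by
    rcases x with i | a <;> rcases y with j | b <;> simp only [complement] <;> split_ifs <;>
      simp_all [t, s, adjacent_comm]
  mk_of_mul := mk_of_mul_complement
  rel_cases _ _ := eq_or_complement_of_rels

lemma commuting_inl_inr (i : ℤ) {b : Fin 6} (hb : 3 ≤ b.val) :
    Commuting complement (.inl i) (.inr b) :=
  ⟨complement_inl_inr_of_le i hb, complement_inr_inl_of_le i hb⟩

lemma mk_t_mul_t_mul (i j : ℤ) (z : M) :
    mk rels (t i) * (mk rels (t (i - 1)) * z) = mk rels (t j) * (mk rels (t (j - 1)) * z) := by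
  rw [← mul_assoc, ← map_mul, mk_t_mul_t i j, map_mul, mul_assoc]

lemma mk_t_s_t_mul (i : ℤ) {b : Fin 6} (hb : b.val < 3) (z : M) :
    mk rels (t i) * (mk rels (s b) * (mk rels (t i) * z)) =
      mk rels (s b) * (mk rels (t i) * (mk rels (s b) * z)) := by
  simp only [← mul_assoc, ← map_mul, mk_t_braid_s i hb]

lemma commute_mk_t_s (i : ℤ) {b : Fin 6} (hb : 3 ≤ b.val) :
    Commute (mk rels (t i)) (mk rels (s b)) :=
  isComplement.commute (commuting_inl_inr i hb)

section Cube

variable {L : ℕ}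

lemma cubeAt_inl_inl_inl (hL : LcmBelow rels complement L) {i j k : ℤ} (hij : i ≠ j)
    (hik : i ≠ k) (hjk : j ≠ k) : CubeAt rels complement L (.inl i) (.inl j) (.inl k) := by
  intro q Z₁ hlen H
  rw [complement_inl_inl (Ne.symm hik)] at H hlen
  rw [complement_inl_inl (Ne.symm hjk)] at H
  rw [complement_inl_inl hik, complement_inl_inl hij, complement_inl_inl hjk,
    complement_inl_inl (Ne.symm hij)]
  exact ⟨q, rfl, by rw [map_mul, map_mul, hL.cancel isComplement _ hlen H]⟩

lemma cubeAt_inl_inr_inl_of_le (hL : LcmBelow rels complement L) {i k : ℤ} (hik : i ≠ k)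
    {b : Fin 6} (hb : 3 ≤ b.val) : CubeAt rels complement L (.inl i) (.inr b) (.inl k) := by
  intro q Z₁ hlen H
  rw [complement_inl_inl (Ne.symm hik)] at H hlen
  rw [complement_inl_inr_of_le k hb] at H
  obtain ⟨Z₂, h₁, h₂⟩ := hL (.inl (k - 1)) (.inr b) q Z₁ hlen H
  rw [complement_inl_inr_of_le _ hb] at h₁
  rw [complement_inr_inl_of_le _ hb] at h₂
  refine ⟨t (i - 1) * Z₂, ?_, ?_⟩
  · rw [complement_inl_inl hik, complement_inl_inr_of_le i hb]
    simp only [map_mul, h₁, (commute_mk_t_s (i - 1) hb).left_comm]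
  · rw [complement_inr_inl_of_le k hb, complement_inr_inl_of_le i hb]
    simp only [map_mul, h₂]
    exact mk_t_mul_t_mul k i _

lemma cubeAt_inl_inl_inr_of_le (hL : LcmBelow rels complement L) {i j : ℤ} (hij : i ≠ j)
    {c : Fin 6} (hc : 3 ≤ c.val) : CubeAt rels complement L (.inl i) (.inl j) (.inr c) := by
  refine cubeAt_of_commuting_commuting hL (commuting_inl_inr i hc) (commuting_inl_inr j hc) ?_ ?_
  · rw [complement_inl_inl hij]
    exact (commute_mk_t_s _ hc).symm
  · rw [complement_inl_inl (Ne.symm hij)]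
    exact (commute_mk_t_s _ hc).symm

lemma cubeAt_inl_inr_inl_of_lt (hL : LcmBelow rels complement L) {i k : ℤ} (hik : i ≠ k)
    {b : Fin 6} (hb : b.val < 3) : CubeAt rels complement L (.inl i) (.inr b) (.inl k) := by
  intro q Z₁ hlen H
  rw [complement_inl_inl (Ne.symm hik)] at H hlen
  rw [complement_inl_inr_of_lt k hb, mul_assoc] at H
  obtain ⟨Z₂, h₁, h₂⟩ := hL (.inl (k - 1)) (.inr b) q (t k * Z₁) hlen H
  rw [complement_inl_inr_of_lt _ hb, mul_assoc] at h₁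
  rw [complement_inr_inl_of_lt _ hb, mul_assoc] at h₂
  have hlen₂ : (t k * Z₁).length < L := by
    have := isComplement.length_eq H
    simp only [length_mul, length_of, t, s] at hlen this ⊢
    omega
  obtain ⟨Z₃, h₃, h₄⟩ := hL (.inl k) (.inl (k - 1)) Z₁ (s b * Z₂) hlen₂ h₂
  rw [complement_inl_inl (by omega)] at h₃ h₄
  have hlen₃ : (s b * Z₂).length < L := by
    have := isComplement.length_eq h₁
    simp only [length_mul, length_of, t, s] at hlen this ⊢
    omega
  obtain ⟨Z₄, h₅, h₆⟩ := hL (.inr b) (.inl (k - 1 - 1)) Z₂ Z₃ hlen₃ h₄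
  rw [complement_inr_inl_of_lt _ hb, mul_assoc] at h₅
  rw [complement_inl_inr_of_lt _ hb, mul_assoc] at h₆
  refine ⟨t (i - 1) * (s b * (t (i - 1 - 1) * Z₄)), ?_, ?_⟩
  · rw [complement_inl_inl hik, complement_inl_inr_of_lt i hb]
    simp only [map_mul, h₁, h₅, mul_assoc]
    rw [mk_t_mul_t_mul (k - 1) (i - 1), mk_t_s_t_mul (i - 1) hb, ← mk_t_s_t_mul (i - 1 - 1) hb,
      mk_t_mul_t_mul (i - 1) i]
  · rw [complement_inr_inl_of_lt k hb, complement_inr_inl_of_lt i hb]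
    simp only [map_mul, h₃, h₆, mul_assoc]
    rw [← mk_t_s_t_mul (k - 1) hb, mk_t_mul_t_mul k i, mk_t_mul_t_mul (k - 1) (i - 1),
      mk_t_s_t_mul (i - 1) hb]

lemma cubeAt_inl_inl_inr_of_lt (hL : LcmBelow rels complement L) {i j : ℤ} (hij : i ≠ j)
    {a : Fin 6} (ha : a.val < 3) : CubeAt rels complement L (.inl i) (.inl j) (.inr a) := by
  intro q Z₁ hlen H
  rw [complement_inr_inl_of_lt i ha, mul_assoc] at H hlen
  rw [complement_inr_inl_of_lt j ha, mul_assoc] at H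
  obtain ⟨Z₂, h₁, h₂⟩ := hL (.inl i) (.inl j) (s a * q) (s a * Z₁) hlen H
  rw [complement_inl_inl hij] at h₁
  rw [complement_inl_inl (Ne.symm hij)] at h₂
  obtain ⟨Z₃, h₃, h₄⟩ := hL (.inr a) (.inl (i - 1)) q Z₂ (length_lt_of_mul_lt hlen) h₁
  rw [complement_inr_inl_of_lt _ ha, mul_assoc] at h₃
  rw [complement_inl_inr_of_lt _ ha, mul_assoc] at h₄
  have hlen₁ : (s a * Z₁).length < L := length_lt_of_mul_lt (isComplement.length_eq H ▸ hlen)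
  obtain ⟨Z₄, h₅, h₆⟩ := hL (.inr a) (.inl (j - 1)) Z₁ (s a * (t (i - 1) * Z₃)) hlen₁
    (h₂.trans (by rw [map_mul, h₄, ← map_mul]; rfl))
  rw [complement_inr_inl_of_lt _ ha, mul_assoc] at h₅
  rw [complement_inl_inr_of_lt _ ha, mul_assoc] at h₆
  have hlen₃ : (s a * (t (i - 1) * Z₃)).length < L := by
    have := isComplement.length_eq h₃
    simp only [length_mul, length_of, t, s] at hlen this ⊢
    omega
  obtain ⟨Z₅, h₇, h₈⟩ := hL (.inl (i - 1)) (.inl (j - 1)) Z₃ Z₄ (length_lt_of_mul_lt hlen₃)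
    (hL.cancel isComplement _ hlen₃ h₆)
  rw [complement_inl_inl (by omega)] at h₇ h₈
  refine ⟨s a * (t (i - 1) * (t (i - 1 - 1) * (s a * Z₅))), ?_, ?_⟩
  · rw [complement_inl_inr_of_lt i ha, complement_inl_inl hij]
    simp only [map_mul, h₃, h₇, mul_assoc]
    rw [mk_t_mul_t_mul i (i - 1), mk_t_s_t_mul (i - 1 - 1) ha, mk_t_s_t_mul (i - 1) ha]
  · rw [complement_inl_inr_of_lt j ha, complement_inl_inl (Ne.symm hij)]
    simp only [map_mul, h₅, h₈, mul_assoc]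
    rw [mk_t_mul_t_mul j (j - 1), mk_t_s_t_mul (j - 1 - 1) ha, ← mk_t_s_t_mul (j - 1) ha,
      mk_t_mul_t_mul (j - 1) (i - 1)]

lemma cubeAt_of_not_two_inl (hL : LcmBelow rels complement L) {x y w : S} (hxy : x ≠ y)
    (hxw : x ≠ w) (hyw : y ≠ w) (h₁ : ¬(x.isLeft ∧ y.isLeft)) (h₂ : ¬(x.isLeft ∧ w.isLeft))
    (h₃ : ¬(y.isLeft ∧ w.isLeft)) : CubeAt rels complement L x y w :=
  cubeAt_of_commuting_or_braiding hL isComplement (commuting_or_braiding hxy h₁)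
    (commuting_or_braiding hxw h₂) (commuting_or_braiding hyw h₃)
    (not_braiding_triangle hxy hxw hyw h₁ h₂ h₃)

end Cube

theorem cubeCondition : CubeCondition rels complement := by
  intro L hL x y w hxy hxw hyw
  rcases x with i | a <;> rcases y with j | b <;> rcases w with k | c
  case inl.inl.inl =>
    exact cubeAt_inl_inl_inl hL (by simpa using hxy) (by simpa using hxw) (by simpa using hyw)
  case inl.inl.inr =>
    rcases lt_or_ge c.val 3 with hc | hc
    · exact cubeAt_inl_inl_inr_of_lt hL (by simpa using hxy) hc
    · exact cubeAt_inl_inl_inr_of_le hL (by simpa using hxy) hc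
  case inl.inr.inl =>
    rcases lt_or_ge b.val 3 with hb | hb
    · exact cubeAt_inl_inr_inl_of_lt hL (by simpa using hxw) hb
    · exact cubeAt_inl_inr_inl_of_le hL (by simpa using hxw) hb
  case inr.inl.inl =>
    rcases lt_or_ge a.val 3 with ha | ha
    · exact isComplement.cubeAt_swap (cubeAt_inl_inr_inl_of_lt hL (by simpa using hyw) ha)
    · exact isComplement.cubeAt_swap (cubeAt_inl_inr_inl_of_le hL (by simpa using hyw) ha)
  all_goals exact cubeAt_of_not_two_inl hL hxy hxw hyw (by simp) (by simp) (by simp)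

instance : IsLeftCancelMul M := isComplement.isLeftCancelMul cubeCondition

/-- Reading words backwards while replacing `tᵢ` by `t₋ᵢ` maps the relation `tᵢtᵢ₋₁ = tⱼtⱼ₋₁`
to `t₋ᵢ₊₁t₋ᵢ = t₋ⱼ₊₁t₋ⱼ`, and every other relation to a relation. -/
def mirror (u : FreeMonoid S) : FreeMonoid S := (map (Sum.map Neg.neg id) u).reverse

lemma mirror_mul (u v : FreeMonoid S) : mirror (u * v) = mirror v * mirror u := by
  simp only [mirror, map_mul, reverse_mul]

lemma mirror_involutive : Function.Involutive mirror := by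
  intro u
  induction u using FreeMonoid.inductionOn' with
  | one => rfl
  | of_mul x u ih =>
    rw [mirror_mul, mirror_mul, ih]
    rcases x with i | b
    · exact congrArg (· * u) (congrArg t (neg_neg i))
    · rfl

@[simp] lemma mirror_t (i : ℤ) : mirror (t i) = t (-i) := rfl

@[simp] lemma mirror_s (b : Fin 6) : mirror (s b) = s b := rfl

lemma mk_mirror_of_rels {u v : FreeMonoid S} (h : rels u v) :
    mk rels (mirror u) = mk rels (mirror v) := by
  rcases h with ⟨i, b, hb, rfl, rfl⟩ | ⟨i, j, rfl, rfl⟩ | ⟨⟨a, b⟩, hab, rfl, rfl⟩ |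
      ⟨a, b, hab, h₁, h₂, rfl, rfl⟩ | ⟨i, b, hb, rfl, rfl⟩ <;>
    simp only [mirror_mul, mirror_t, mirror_s]
  · exact mk_t_braid_s (-i) hb
  · have e : ∀ m : ℤ, -(m - 1) - 1 = -m := fun m => by ring
    simpa only [e] using mk_t_mul_t (-(i - 1)) (-(j - 1))
  · exact mk_s_braid_s (.inl hab)
  · exact mk_s_mul_s (Ne.symm hab) (fun h => h.elim h₂ h₁)
  · exact (mk_t_mul_s (-i) hb).symm

instance : IsRightCancelMul M :=
  isRightCancelMul_of_antiInvolution mirror mirror_involutive mirror_mul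
    fun _ _ => mk_mirror_of_rels

theorem cancellative :
    ∀ u v w : M, (u * v = u * w → v = w) ∧ (v * u = w * u → v = w) :=
  fun _ _ _ => ⟨fun h => mul_left_cancel h, fun h => mul_right_cancel h⟩

end EllipticE6Monoid
end

section
/- The elliptic Artin monoid M'(Ẽ₇^{(1,1)}) is cancellative: for all elements u, v, w of M'(Ẽ₇^{(1,1)}), u·v = u·w implies v = w, and v·u = w·u implies v = w. -/
/-!
Every defining relation has the form `x θ(x,y) = y θ(y,x)` for a complement map `θ` on the
generators, and all relations preserve word length. Left cancellativity then follows from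
Dehornoy's cube condition, by induction on length: a common left multiple `x u = y v` factors as
`u = θ(x,y) w`, `v = θ(y,x) w`, as one sees by following a rewriting sequence from `x u` to `y v`
and invoking the cube condition at each step that changes the first letter.

On a triple of generators containing at most one `tᵢ` the relations are braid and commutation
relations along the edges of the tree Ẽ₇, so the cube condition there is the one of the Artin
monoids of types A₁ × A₁ × A₁, A₁ × A₂ and A₃. The triples with two or three `tᵢ` are checked by
hand. Right cancellativity follows by the anti-automorphism reversing words and sending `tᵢ` to
`t₋ᵢ`.
-/

namespace EllipticE7Monoid

/-- Generators: `Sum.inl i` is `tᵢ` (`i ∈ ℤ`), `Sum.inr j` is `s_(j+1)`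
(so `Sum.inr 0` is `s₁`, ..., `Sum.inr 6` is `s₇`). -/
abbrev S : Type := ℤ ⊕ Fin 7

def t (i : ℤ) : FreeMonoid S := FreeMonoid.of (Sum.inl i)
def s (j : Fin 7) : FreeMonoid S := FreeMonoid.of (Sum.inr j)

/-- The pairs of (0-indexed) `s`-generators joined by an edge in the diagram,
i.e. satisfying a braid relation: (s₂,s₄), (s₄,s₅), (s₃,s₆), (s₆,s₇). -/
def braidPairs : List (Fin 7 × Fin 7) := [(1, 3), (3, 4), (2, 5), (5, 6)]

/-- The defining relations of `M'(Ẽ₇^{(1,1)})`: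
`tᵢsⱼtᵢ = sⱼtᵢsⱼ` for `i ∈ ℤ` and `j ∈ {1,2,3}`;
`tᵢtᵢ₋₁ = tⱼtⱼ₋₁` for all `i, j ∈ ℤ`;
braid relations `xyx = yxy` along the edges of the `s`-part of the diagram;
commutation relations between the remaining pairs of distinct `s`-generators;
and commutation of every `tᵢ` with `s₄, …, s₇`. -/
def rels : FreeMonoid S → FreeMonoid S → Prop := fun a b =>
  (∃ i : ℤ, ∃ j : Fin 7, j.val < 3 ∧ a = t i * s j * t i ∧ b = s j * t i * s j) ∨
  (∃ i j : ℤ, a = t i * t (i - 1) ∧ b = t j * t (j - 1)) ∨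
  (∃ q ∈ braidPairs, a = s q.1 * s q.2 * s q.1 ∧ b = s q.2 * s q.1 * s q.2) ∨
  (∃ i j : Fin 7, i ≠ j ∧ (i, j) ∉ braidPairs ∧ (j, i) ∉ braidPairs ∧
    a = s i * s j ∧ b = s j * s i) ∨
  (∃ i : ℤ, ∃ j : Fin 7, 3 ≤ j.val ∧ a = t i * s j ∧ b = s j * t i)

/-- The elliptic Artin monoid `M'(Ẽ₇^{(1,1)})`. -/
abbrev M := PresentedMonoid rels

end EllipticE7Monoid

namespace FreeMonoid

variable {α : Type*}

lemma lift_const_ofAdd_one (a : FreeMonoid α) :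
    lift (fun _ => Multiplicative.ofAdd 1) a = Multiplicative.ofAdd a.length := by
  induction a using FreeMonoid.inductionOn' with
  | one => rfl
  | of_mul x a ih => rw [map_mul, ih, lift_eval_of, length_mul, length_of, ofAdd_add]

lemma of_mul_eq_of_mul_iff {x y : α} {a b : FreeMonoid α} :
    of x * a = of y * b ↔ x = y ∧ a = b := by
  rw [← toList.injective.eq_iff, toList_of_mul, toList_of_mul, List.cons.injEq,
    toList.injective.eq_iff]

end FreeMonoid

namespace PresentedMonoid

open Relation

variable {α : Type*}

class IsHomogeneous (r : FreeMonoid α → FreeMonoid α → Prop) : Prop where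
  length_eq_of_rel : ∀ a b, r a b → a.length = b.length

variable {r : FreeMonoid α → FreeMonoid α → Prop}

section Length

variable [IsHomogeneous r]

def lengthHom : PresentedMonoid r →* Multiplicative ℕ :=
  lift (fun _ => .ofAdd 1) fun a b h => by
    rw [FreeMonoid.lift_const_ofAdd_one, FreeMonoid.lift_const_ofAdd_one,
      IsHomogeneous.length_eq_of_rel a b h]

def length (m : PresentedMonoid r) : ℕ := (lengthHom m).toAdd

@[simp] lemma length_mk (a : FreeMonoid α) : length (mk r a) = a.length :=
  congrArg Multiplicative.toAdd (FreeMonoid.lift_const_ofAdd_one a)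

@[simp] lemma length_of (x : α) : length (of r x) = 1 := length_mk _

@[simp] lemma length_mul (m n : PresentedMonoid r) : length (m * n) = length m + length n := by
  simp only [length, map_mul, toAdd_mul]

end Length

variable (r) in
def RewriteStep (a b : FreeMonoid α) : Prop :=
  ∃ l p q s, (r p q ∨ r q p) ∧ a = l * p * s ∧ b = l * q * s

instance : Std.Symm (RewriteStep r) where
  symm _ _ := fun ⟨l, p, q, s, h, ha, hb⟩ => ⟨l, q, p, s, h.symm, hb, ha⟩

variable (r) in
def rewriteCon : Con (FreeMonoid α) where
  r := ReflTransGen (RewriteStep r)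
  iseqv := ⟨fun _ => .refl, symm_of _, .trans⟩
  mul' {a b c d} hab hcd := by
    refine .trans (ReflTransGen.lift (· * c) ?_ _ _ hab) (ReflTransGen.lift (b * ·) ?_ _ _ hcd)
    · rintro _ _ ⟨l, p, q, s, h, rfl, rfl⟩
      exact ⟨l, p, q, s * c, h, by simp only [mul_assoc], by simp only [mul_assoc]⟩
    · rintro _ _ ⟨l, p, q, s, h, rfl, rfl⟩
      exact ⟨b * l, p, q, s, h, by simp only [mul_assoc], by simp only [mul_assoc]⟩

lemma reflTransGen_rewriteStep_of_mk_eq {a b : FreeMonoid α} (h : mk r a = mk r b) :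
    ReflTransGen (RewriteStep r) a b :=
  (Con.conGen_le (c := rewriteCon r)).2
    (fun p q hpq => .single ⟨1, p, q, 1, .inl hpq, by simp, by simp⟩) (mk_eq_mk_iff.1 h)

section RightComplement

variable (r) (θ : α → α → FreeMonoid α)

structure IsRightComplement : Prop where
  intro ::
  complement_self : ∀ x, θ x x = 1
  eq_or_exists_of_rel : ∀ a b, r a b → a = b ∨ ∃ x y, a = .of x * θ x y ∧ b = .of y * θ y x
  mk_of_mul_complement : ∀ x y, mk r (.of x * θ x y) = mk r (.of y * θ y x)

variable {r θ}

lemma IsRightComplement.mk_complement_self (hθ : IsRightComplement r θ) (x : α) :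
    mk r (θ x x) = 1 := by
  rw [hθ.complement_self, map_one]

lemma IsRightComplement.rewriteStep_of_mul (hθ : IsRightComplement r θ) {x : α}
    {a c : FreeMonoid α} (h : RewriteStep r (.of x * a) c) :
    (∃ a', c = .of x * a' ∧ mk r a = mk r a') ∨
      ∃ x' s, a = θ x x' * s ∧ c = .of x' * (θ x' x * s) := by
  obtain ⟨l, p, q, s, hpq, ha, rfl⟩ := h
  have hpq' : p = q ∨ ∃ y z, p = .of y * θ y z ∧ q = .of z * θ z y := by
    rcases hpq with hpq | hpq
    · exact hθ.eq_or_exists_of_rel p q hpq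
    · rcases hθ.eq_or_exists_of_rel q p hpq with rfl | ⟨y, z, rfl, rfl⟩
      · exact .inl rfl
      · exact .inr ⟨z, y, rfl, rfl⟩
  cases l with
  | one =>
    rcases hpq' with rfl | ⟨y, z, rfl, rfl⟩
    · exact .inl ⟨a, by rw [ha], rfl⟩
    · rw [one_mul, mul_assoc, FreeMonoid.of_mul_eq_of_mul_iff] at ha
      obtain ⟨rfl, rfl⟩ := ha
      exact .inr ⟨z, s, rfl, by rw [one_mul, mul_assoc]⟩
  | of_mul z l =>
    simp only [mul_assoc, FreeMonoid.of_mul_eq_of_mul_iff] at ha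
    obtain ⟨rfl, rfl⟩ := ha
    have hmk : mk r p = mk r q := by
      rcases hpq with hpq | hpq
      · exact mk_eq_mk_of_rel hpq
      · exact (mk_eq_mk_of_rel hpq).symm
    exact .inl ⟨l * (q * s), by simp only [mul_assoc], by simp only [map_mul, hmk]⟩

lemma IsRightComplement.length_comm [IsHomogeneous r] (hθ : IsRightComplement r θ) (x y : α) :
    (θ x y).length = (θ y x).length := by
  have h := congrArg length (hθ.mk_of_mul_complement x y)
  simp only [length_mk, FreeMonoid.length_mul, FreeMonoid.length_of] at h
  omega

variable (r θ) [IsHomogeneous r]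

def FactorsThroughComplement (N : ℕ) : Prop :=
  ∀ x y (u v : PresentedMonoid r), length u < N → of r x * u = of r y * v →
    ∃ w, u = mk r (θ x y) * w ∧ v = mk r (θ y x) * w

def CubeCondition (N : ℕ) (x₁ x y : α) : Prop :=
  ∀ d e : PresentedMonoid r, length (mk r (θ x₁ x) * d) ≤ N →
    mk r (θ x₁ x) * d = mk r (θ x₁ y) * e →
    ∃ w, mk r (θ x x₁) * d = mk r (θ x y) * w ∧ mk r (θ y x₁) * e = mk r (θ y x) * w

variable {r θ} {N : ℕ}

lemma FactorsThroughComplement.mul_left_cancel_of (hs : FactorsThroughComplement r θ N) {x : α}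
    {u v : PresentedMonoid r} (hl : length u < N) (h : of r x * u = of r x * v) : u = v := by
  obtain ⟨w, rfl, rfl⟩ := hs x x u v hl h
  rfl

lemma FactorsThroughComplement.mul_left_cancel_mk (hs : FactorsThroughComplement r θ N)
    (a : FreeMonoid α) {u v : PresentedMonoid r} (hl : length (mk r a * u) ≤ N)
    (h : mk r a * u = mk r a * v) : u = v := by
  induction a using FreeMonoid.inductionOn' with
  | one => simpa using h
  | of_mul x a ih =>
    simp only [map_mul, mul_assoc, length_mul, length_mk, FreeMonoid.length_of] at hl h
    exact ih (by rw [length_mul, length_mk]; omega)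
      (hs.mul_left_cancel_of (by rw [length_mul, length_mk]; omega) h)

lemma CubeCondition.swap {x₁ x y : α} (h : CubeCondition r θ N x₁ x y) :
    CubeCondition r θ N x₁ y x := fun d e hl H => by
  obtain ⟨w, hd, he⟩ := h e d (H ▸ hl) H.symm
  exact ⟨w, he, hd⟩

lemma IsRightComplement.cubeCondition_self_left (hθ : IsRightComplement r θ) (x y : α) :
    CubeCondition r θ N x x y := fun d e _ H =>
  ⟨e, by rwa [hθ.mk_complement_self, one_mul] at H ⊢, rfl⟩

lemma FactorsThroughComplement.cubeCondition_of_eq (hθ : IsRightComplement r θ)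
    (hs : FactorsThroughComplement r θ N) (x₁ x : α) : CubeCondition r θ N x₁ x x :=
  fun d e hl H => by
    obtain rfl := hs.mul_left_cancel_mk _ hl H
    exact ⟨mk r (θ x x₁) * d, by rw [hθ.mk_complement_self, one_mul],
      by rw [hθ.mk_complement_self, one_mul]⟩

theorem IsRightComplement.factorsThroughComplement_succ (hθ : IsRightComplement r θ)
    (hcube : ∀ x₁ x y, CubeCondition r θ N x₁ x y) :
    FactorsThroughComplement r θ (N + 1) := by
  intro x y u v hl h
  obtain ⟨a, rfl⟩ := surjective_mk u
  obtain ⟨b, rfl⟩ := surjective_mk v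
  have hrw : ReflTransGen (RewriteStep r) (.of x * a) (.of y * b) :=
    reflTransGen_rewriteStep_of_mk_eq h
  rw [length_mk] at hl
  clear h
  generalize hc : FreeMonoid.of x * a = c at hrw
  induction hrw using ReflTransGen.head_induction_on generalizing a x with
  | refl =>
    obtain ⟨rfl, rfl⟩ := FreeMonoid.of_mul_eq_of_mul_iff.1 hc
    exact ⟨mk r a, by rw [hθ.mk_complement_self, one_mul], by rw [hθ.mk_complement_self, one_mul]⟩
  | head hstep _ ih =>
    subst hc
    rcases hθ.rewriteStep_of_mul hstep with ⟨a', rfl, ha⟩ | ⟨x', s, rfl, rfl⟩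
    · have hl' : a'.length < N + 1 := by rwa [← length_mk (r := r), ← ha, length_mk]
      simpa only [ha] using ih x a' hl' rfl
    · -- the step replaces `x θ(x,x')` by `x' θ(x',x)` at the front; the cube condition at
      -- `(x', x, y)` carries the factorisation through `x'` over to `x`
      have hl' : (θ x' x * s).length ≤ N := by
        simp only [FreeMonoid.length_mul, hθ.length_comm x' x] at hl ⊢
        omega
      obtain ⟨w', hw', hb⟩ := ih x' _ (by omega) rfl
      rw [map_mul] at hw'
      obtain ⟨w, hsw, hw⟩ := hcube x' x y _ w' (by rwa [← map_mul, length_mk]) hw'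
      exact ⟨w, by rw [map_mul, hsw], hb.trans hw⟩

theorem IsRightComplement.factorsThroughComplement (hθ : IsRightComplement r θ)
    (hcube : ∀ N, FactorsThroughComplement r θ N → ∀ x₁ x y, x₁ ≠ x → x₁ ≠ y → x ≠ y →
      CubeCondition r θ N x₁ x y) (N : ℕ) :
    FactorsThroughComplement r θ N := by
  induction N with
  | zero => exact fun _ _ _ _ hl => absurd hl (Nat.not_lt_zero _)
  | succ N hs =>
    refine hθ.factorsThroughComplement_succ fun x₁ x y => ?_
    by_cases h₁ : x₁ = x
    · exact h₁ ▸ hθ.cubeCondition_self_left x₁ y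
    by_cases h₂ : x₁ = y
    · exact h₂ ▸ (hθ.cubeCondition_self_left x₁ x).swap
    by_cases h₃ : x = y
    · exact h₃ ▸ hs.cubeCondition_of_eq hθ x₁ x
    exact hcube N hs x₁ x y h₁ h₂ h₃

theorem IsRightComplement.isLeftCancelMul (hθ : IsRightComplement r θ)
    (hcube : ∀ N, FactorsThroughComplement r θ N → ∀ x₁ x y, x₁ ≠ x → x₁ ≠ y → x ≠ y →
      CubeCondition r θ N x₁ x y) :
    IsLeftCancelMul (PresentedMonoid r) where
  mul_left_cancel a u v h := by
    obtain ⟨a, rfl⟩ := surjective_mk a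
    exact (hθ.factorsThroughComplement hcube _).mul_left_cancel_mk a le_rfl h

end RightComplement

section ArtinTriples

variable (θ : α → α → FreeMonoid α)

def IsBraidPair (x y : α) : Prop := θ x y = .of y * .of x ∧ θ y x = .of x * .of y

def IsCommutingPair (x y : α) : Prop := θ x y = .of y ∧ θ y x = .of x

variable {θ} {x y : α}

lemma IsBraidPair.symm (h : IsBraidPair θ x y) : IsBraidPair θ y x := And.symm h

lemma IsCommutingPair.symm (h : IsCommutingPair θ x y) : IsCommutingPair θ y x := And.symm h

lemma IsBraidPair.mk_complement (h : IsBraidPair θ x y) : mk r (θ x y) = of r y * of r x := by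
  rw [h.1, map_mul]; rfl

lemma IsCommutingPair.mk_complement (h : IsCommutingPair θ x y) : mk r (θ x y) = of r y := by
  rw [h.1]; rfl

lemma IsBraidPair.of_mul_of_mul_of (hθ : IsRightComplement r θ) (h : IsBraidPair θ x y)
    (z : PresentedMonoid r) :
    of r x * (of r y * (of r x * z)) = of r y * (of r x * (of r y * z)) := by
  have hxy := hθ.mk_of_mul_complement x y
  rw [h.1, h.2] at hxy
  simp only [← mul_assoc]
  exact congrArg (· * z) hxy

lemma IsCommutingPair.of_mul_of (hθ : IsRightComplement r θ) (h : IsCommutingPair θ x y)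
    (z : PresentedMonoid r) : of r x * (of r y * z) = of r y * (of r x * z) := by
  have hxy := hθ.mk_of_mul_complement x y
  rw [h.1, h.2] at hxy
  simp only [← mul_assoc]
  exact congrArg (· * z) hxy

variable [IsHomogeneous r] {N : ℕ} {u v : PresentedMonoid r}

lemma FactorsThroughComplement.braid (hs : FactorsThroughComplement r θ N)
    (h : IsBraidPair θ x y) (hl : length u < N) (huv : of r x * u = of r y * v) :
    ∃ w, u = of r y * (of r x * w) ∧ v = of r x * (of r y * w) := by
  obtain ⟨w, rfl, rfl⟩ := hs x y u v hl huv
  exact ⟨w, by rw [h.mk_complement, mul_assoc], by rw [h.symm.mk_complement, mul_assoc]⟩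

lemma FactorsThroughComplement.commute (hs : FactorsThroughComplement r θ N)
    (h : IsCommutingPair θ x y) (hl : length u < N) (huv : of r x * u = of r y * v) :
    ∃ w, u = of r y * w ∧ v = of r x * w := by
  obtain ⟨w, rfl, rfl⟩ := hs x y u v hl huv
  exact ⟨w, by rw [h.mk_complement], by rw [h.symm.mk_complement]⟩

variable {x₁ : α}

lemma FactorsThroughComplement.cubeCondition_of_commuting (hθ : IsRightComplement r θ)
    (hs : FactorsThroughComplement r θ N) (h₁ : IsCommutingPair θ x₁ x)
    (h₂ : IsCommutingPair θ x₁ y) (h₃ : IsCommutingPair θ x y) :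
    CubeCondition r θ N x₁ x y := fun d e hl H => by
  rw [h₁.mk_complement, length_mul, length_of] at hl
  rw [h₁.mk_complement, h₂.mk_complement] at H
  obtain ⟨ρ, rfl, rfl⟩ := hs.commute h₃ (by omega) H
  rw [h₁.symm.mk_complement, h₂.symm.mk_complement, h₃.mk_complement, h₃.symm.mk_complement]
  exact ⟨of r x₁ * ρ, h₂.of_mul_of hθ ρ, h₁.of_mul_of hθ ρ⟩

lemma FactorsThroughComplement.cubeCondition_of_braid_opposite (hθ : IsRightComplement r θ)
    (hs : FactorsThroughComplement r θ N) (h₁ : IsCommutingPair θ x₁ x)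
    (h₂ : IsCommutingPair θ x₁ y) (h₃ : IsBraidPair θ x y) :
    CubeCondition r θ N x₁ x y := fun d e hl H => by
  rw [h₁.mk_complement, length_mul, length_of] at hl
  rw [h₁.mk_complement, h₂.mk_complement] at H
  obtain ⟨ρ, rfl, rfl⟩ := hs.braid h₃ (by omega) H
  rw [h₁.symm.mk_complement, h₂.symm.mk_complement, h₃.mk_complement, h₃.symm.mk_complement]
  refine ⟨of r x₁ * ρ, ?_, ?_⟩
  · rw [h₂.of_mul_of hθ, h₁.of_mul_of hθ, mul_assoc]
  · rw [h₁.of_mul_of hθ, h₂.of_mul_of hθ, mul_assoc]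

lemma FactorsThroughComplement.cubeCondition_of_braid_adjacent (hθ : IsRightComplement r θ)
    (hs : FactorsThroughComplement r θ N) (h₁ : IsBraidPair θ x₁ x)
    (h₂ : IsCommutingPair θ x₁ y) (h₃ : IsCommutingPair θ x y) :
    CubeCondition r θ N x₁ x y := fun d e hl H => by
  rw [h₁.mk_complement, h₂.mk_complement, mul_assoc] at H
  rw [h₁.mk_complement] at hl
  simp only [length_mul, length_of] at hl
  obtain ⟨ρ, hd, rfl⟩ := hs.commute h₃ (by simp only [length_mul, length_of]; omega) H
  obtain ⟨ρ, rfl, rfl⟩ := hs.commute h₂ (by omega) hd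
  rw [h₁.symm.mk_complement, h₂.symm.mk_complement, h₃.mk_complement, h₃.symm.mk_complement]
  refine ⟨of r x₁ * (of r x * ρ), ?_, h₁.of_mul_of_mul_of hθ ρ⟩
  rw [mul_assoc, h₃.of_mul_of hθ, h₂.of_mul_of hθ]

lemma FactorsThroughComplement.cubeCondition_of_braid_path (hθ : IsRightComplement r θ)
    (hs : FactorsThroughComplement r θ N) (h₁ : IsBraidPair θ x₁ x)
    (h₂ : IsCommutingPair θ x₁ y) (h₃ : IsBraidPair θ x y) :
    CubeCondition r θ N x₁ x y := fun d e hl H => by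
  rw [h₁.mk_complement, h₂.mk_complement, mul_assoc] at H
  rw [h₁.mk_complement] at hl
  simp only [length_mul, length_of] at hl
  obtain ⟨ρ, hd, rfl⟩ := hs.braid h₃ (by simp only [length_mul, length_of]; omega) H
  obtain ⟨ρ', rfl, hρ⟩ := hs.commute h₂ (by omega) hd
  have hlρ := congrArg length hρ
  simp only [length_mul, length_of] at hl hlρ
  obtain ⟨σ, rfl, rfl⟩ := hs.braid h₁.symm (by omega) hρ
  rw [h₁.symm.mk_complement, h₂.symm.mk_complement, h₃.mk_complement, h₃.symm.mk_complement]
  refine ⟨of r x₁ * (of r x * (of r y * σ)), ?_, ?_⟩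
  · simp only [mul_assoc]
    rw [h₃.of_mul_of_mul_of hθ (of r x₁ * σ), h₂.of_mul_of hθ, h₂.symm.of_mul_of hθ σ,
      h₁.of_mul_of_mul_of hθ]
  · simp only [mul_assoc]
    rw [h₂.symm.of_mul_of hθ (of r x * σ), h₁.of_mul_of_mul_of hθ,
      h₃.of_mul_of_mul_of hθ σ, h₂.of_mul_of hθ (of r x * (of r y * σ))]

lemma FactorsThroughComplement.cubeCondition_of_braid_center (hθ : IsRightComplement r θ)
    (hs : FactorsThroughComplement r θ N) (h₁ : IsBraidPair θ x₁ x)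
    (h₂ : IsBraidPair θ x₁ y) (h₃ : IsCommutingPair θ x y) :
    CubeCondition r θ N x₁ x y := fun d e hl H => by
  rw [h₁.mk_complement, h₂.mk_complement, mul_assoc, mul_assoc] at H
  rw [h₁.mk_complement] at hl
  simp only [length_mul, length_of] at hl
  obtain ⟨ρ, hd, he⟩ := hs.commute h₃ (by simp only [length_mul, length_of]; omega) H
  obtain ⟨ρ', rfl, rfl⟩ := hs.braid h₂ (by omega) hd
  have hle := congrArg length he
  simp only [length_mul, length_of] at hl hle
  obtain ⟨σ, rfl, hσ⟩ := hs.braid h₁ (by omega) he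
  obtain ⟨τ, rfl, rfl⟩ :=
    hs.commute h₃.symm (by omega)
      (hs.mul_left_cancel_of (by simp only [length_mul, length_of]; omega) hσ)
  rw [h₁.symm.mk_complement, h₂.symm.mk_complement, h₃.mk_complement, h₃.symm.mk_complement]
  refine ⟨of r x₁ * (of r y * (of r x * (of r x₁ * τ))), ?_, ?_⟩
  · simp only [mul_assoc]
    rw [h₃.of_mul_of hθ (of r x₁ * (of r x * τ)), h₁.symm.of_mul_of_mul_of hθ τ,
      h₂.of_mul_of_mul_of hθ]
  · simp only [mul_assoc]
    rw [h₃.symm.of_mul_of hθ (of r x₁ * (of r y * τ)), h₂.symm.of_mul_of_mul_of hθ τ,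
      h₁.of_mul_of_mul_of hθ, h₃.of_mul_of hθ (of r x₁ * τ)]

theorem FactorsThroughComplement.cubeCondition_of_artin (hθ : IsRightComplement r θ)
    (hs : FactorsThroughComplement r θ N) (h₁ : IsBraidPair θ x₁ x ∨ IsCommutingPair θ x₁ x)
    (h₂ : IsBraidPair θ x₁ y ∨ IsCommutingPair θ x₁ y)
    (h₃ : IsBraidPair θ x y ∨ IsCommutingPair θ x y)
    (hfree : ¬ (IsBraidPair θ x₁ x ∧ IsBraidPair θ x₁ y ∧ IsBraidPair θ x y)) :
    CubeCondition r θ N x₁ x y := by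
  rcases h₁ with h₁ | h₁ <;> rcases h₂ with h₂ | h₂ <;> rcases h₃ with h₃ | h₃
  · exact absurd ⟨h₁, h₂, h₃⟩ hfree
  · exact hs.cubeCondition_of_braid_center hθ h₁ h₂ h₃
  · exact hs.cubeCondition_of_braid_path hθ h₁ h₂ h₃
  · exact hs.cubeCondition_of_braid_adjacent hθ h₁ h₂ h₃
  · exact (hs.cubeCondition_of_braid_path hθ h₂ h₁ h₃.symm).swap
  · exact (hs.cubeCondition_of_braid_adjacent hθ h₂ h₁ h₃.symm).swap
  · exact hs.cubeCondition_of_braid_opposite hθ h₁ h₂ h₃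
  · exact hs.cubeCondition_of_commuting hθ h₁ h₂ h₃

end ArtinTriples

end PresentedMonoid

namespace EllipticE7Monoid

open PresentedMonoid

instance : IsHomogeneous rels where
  length_eq_of_rel a b := by
    rintro (⟨i, j, -, rfl, rfl⟩ | ⟨i, j, rfl, rfl⟩ | ⟨q, -, rfl, rfl⟩ | ⟨i, j, -, -, -, rfl, rfl⟩ |
      ⟨i, j, -, rfl, rfl⟩) <;> rfl

-- The edges of the diagram Ẽ₇, with every `tᵢ` in the place of its branch node.
def linked : S → S → Prop
  | .inl _, .inl _ => False
  | .inl _, .inr j | .inr j, .inl _ => j.val < 3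
  | .inr i, .inr j => (i, j) ∈ braidPairs ∨ (j, i) ∈ braidPairs

instance : DecidableRel linked := fun x y => by
  cases x <;> cases y <;> unfold linked <;> infer_instance

lemma linked_comm (x y : S) : linked x y ↔ linked y x := by
  cases x <;> cases y <;> simp only [linked, or_comm]

lemma not_linked_triangle : ∀ x y z : S, linked x y → linked x z → linked y z → False := by
  have hs : ∀ i j k : Fin 7, linked (.inr i) (.inr j) → linked (.inr i) (.inr k) →
      linked (.inr j) (.inr k) → False := by decide
  have ht : ∀ j k : Fin 7, j.val < 3 → k.val < 3 → linked (.inr j) (.inr k) → False := by decide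
  rintro (_ | i) (_ | j) (_ | k) hxy hxz hyz
  all_goals first
    | exact hxy | exact hxz | exact hyz | exact hs _ _ _ hxy hxz hyz
    | exact ht _ _ hxy hxz hyz | exact ht _ _ hxy hyz hxz | exact ht _ _ hxz hyz hxy

-- The defining relation between distinct generators `x` and `y` reads
-- `x * complement x y = y * complement y x`.
def complement : S → S → FreeMonoid S
  | .inl i, .inl j => if i = j then 1 else t (i - 1)
  | x, y => if x = y then 1 else if linked x y then .of y * .of x else .of y

lemma complement_self (x : S) : complement x x = 1 := by
  cases x <;> simp [complement]

lemma complement_inl_inl {i j : ℤ} (h : i ≠ j) : complement (.inl i) (.inl j) = t (i - 1) := by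
  simp [complement, h]

lemma complement_eq_ite {x y : S} (hxy : x ≠ y) (hl : ¬ (x.isLeft ∧ y.isLeft)) :
    complement x y = if linked x y then .of y * .of x else .of y := by
  rcases x with i | i <;> rcases y with j | j
  · simp at hl
  all_goals simp only [complement, if_neg hxy]

lemma isBraidPair_of_linked {x y : S} (h : linked x y) : IsBraidPair complement x y := by
  have hne : x ≠ y := by rintro rfl; exact not_linked_triangle x x x h h h
  have hl : ¬ (x.isLeft ∧ y.isLeft) := by
    rcases x with _ | _ <;> rcases y with _ | _ <;> simp_all [linked]
  rw [IsBraidPair, complement_eq_ite hne hl, complement_eq_ite hne.symm (by tauto),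
    if_pos h, if_pos ((linked_comm x y).1 h)]
  exact ⟨rfl, rfl⟩

lemma isCommutingPair_of_not_linked {x y : S} (hxy : x ≠ y) (hl : ¬ (x.isLeft ∧ y.isLeft))
    (h : ¬ linked x y) : IsCommutingPair complement x y := by
  rw [IsCommutingPair, complement_eq_ite hxy hl, complement_eq_ite hxy.symm (by tauto),
    if_neg h, if_neg (mt (linked_comm x y).2 h)]
  exact ⟨rfl, rfl⟩

lemma isBraidPair_or_isCommutingPair {x y : S} (hxy : x ≠ y) (hl : ¬ (x.isLeft ∧ y.isLeft)) :
    IsBraidPair complement x y ∨ IsCommutingPair complement x y := by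
  by_cases h : linked x y
  · exact .inl (isBraidPair_of_linked h)
  · exact .inr (isCommutingPair_of_not_linked hxy hl h)

lemma isBraidPair_inl_or_isCommutingPair_inl (j : Fin 7) :
    (∀ i, IsBraidPair complement (.inl i) (.inr j)) ∨
      ∀ i, IsCommutingPair complement (.inl i) (.inr j) := by
  by_cases hj : j.val < 3
  · exact .inl fun _ => isBraidPair_of_linked hj
  · exact .inr fun _ => isCommutingPair_of_not_linked (by simp) (by simp) hj

lemma linked_of_isBraidPair {x y : S} (h : IsBraidPair complement x y) : linked x y := by
  by_contra hn
  have hlen : (complement x y).length ≤ 1 := by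
    rcases x with i | i <;> rcases y with j | j <;> simp only [complement] <;> split_ifs <;>
      simp_all [t]
  rw [h.1] at hlen
  simp at hlen

lemma rels_of_mul_complement {x y : S} (hxy : x ≠ y) :
    rels (.of x * complement x y) (.of y * complement y x) ∨
      rels (.of y * complement y x) (.of x * complement x y) := by
  rcases x with i | i <;> rcases y with j | j
  · have hij : i ≠ j := fun h => hxy (h ▸ rfl)
    rw [complement_inl_inl hij, complement_inl_inl hij.symm]
    exact .inl (.inr (.inl ⟨i, j, rfl, rfl⟩))
  · by_cases hj : j.val < 3
    · have hb : IsBraidPair complement (.inl i) (.inr j) := isBraidPair_of_linked hj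
      rw [hb.1, hb.2]
      exact .inl (.inl ⟨i, j, hj, rfl, rfl⟩)
    · have hc : IsCommutingPair complement (.inl i) (.inr j) :=
        isCommutingPair_of_not_linked (by simp) (by simp) hj
      rw [hc.1, hc.2]
      exact .inl (.inr (.inr (.inr (.inr ⟨i, j, by omega, rfl, rfl⟩))))
  · by_cases hi : i.val < 3
    · have hb : IsBraidPair complement (.inl j) (.inr i) := isBraidPair_of_linked hi
      rw [hb.1, hb.2]
      exact .inr (.inl ⟨j, i, hi, rfl, rfl⟩)
    · have hc : IsCommutingPair complement (.inl j) (.inr i) :=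
        isCommutingPair_of_not_linked (by simp) (by simp) hi
      rw [hc.1, hc.2]
      exact .inr (.inr (.inr (.inr (.inr ⟨j, i, by omega, rfl, rfl⟩))))
  · have hij : i ≠ j := fun h => hxy (h ▸ rfl)
    by_cases h : (i, j) ∈ braidPairs
    · have hb : IsBraidPair complement (.inr i) (.inr j) := isBraidPair_of_linked (.inl h)
      rw [hb.1, hb.2]
      exact .inl (.inr (.inr (.inl ⟨(i, j), h, rfl, rfl⟩)))
    by_cases h' : (j, i) ∈ braidPairs
    · have hb : IsBraidPair complement (.inr j) (.inr i) := isBraidPair_of_linked (.inl h')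
      rw [hb.1, hb.2]
      exact .inr (.inr (.inr (.inl ⟨(j, i), h', rfl, rfl⟩)))
    · have hc : IsCommutingPair complement (.inr i) (.inr j) :=
        isCommutingPair_of_not_linked hxy (by simp) (by rintro (h | h) <;> contradiction)
      rw [hc.1, hc.2]
      exact .inl (.inr (.inr (.inr (.inl ⟨i, j, hij, h, h', rfl, rfl⟩))))

theorem isRightComplement : IsRightComplement rels complement where
  complement_self := complement_self
  eq_or_exists_of_rel a b := by
    rintro (⟨i, j, hj, rfl, rfl⟩ | ⟨i, j, rfl, rfl⟩ | ⟨q, hq, rfl, rfl⟩ |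
      ⟨i, j, hij, h, h', rfl, rfl⟩ | ⟨i, j, hj, rfl, rfl⟩)
    · have hb : IsBraidPair complement (.inl i) (.inr j) := isBraidPair_of_linked hj
      exact .inr ⟨.inl i, .inr j, by rw [hb.1]; rfl, by rw [hb.2]; rfl⟩
    · by_cases hij : i = j
      · exact .inl (hij ▸ rfl)
      · exact .inr ⟨.inl i, .inl j, by rw [complement_inl_inl hij]; rfl,
          by rw [complement_inl_inl (Ne.symm hij)]; rfl⟩
    · have hb : IsBraidPair complement (.inr q.1) (.inr q.2) := isBraidPair_of_linked (.inl hq)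
      exact .inr ⟨.inr q.1, .inr q.2, by rw [hb.1]; rfl, by rw [hb.2]; rfl⟩
    · have hc : IsCommutingPair complement (.inr i) (.inr j) :=
        isCommutingPair_of_not_linked (by simpa using hij) (by simp)
          (by rintro (h | h) <;> contradiction)
      exact .inr ⟨.inr i, .inr j, by rw [hc.1]; rfl, by rw [hc.2]; rfl⟩
    · have hc : IsCommutingPair complement (.inl i) (.inr j) :=
        isCommutingPair_of_not_linked (by simp) (by simp) (by simp only [linked]; omega)
      exact .inr ⟨.inl i, .inr j, by rw [hc.1]; rfl, by rw [hc.2]; rfl⟩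
  mk_of_mul_complement x y := by
    by_cases hxy : x = y
    · rw [hxy]
    · rcases rels_of_mul_complement hxy with h | h
      · exact mk_eq_mk_of_rel h
      · exact (mk_eq_mk_of_rel h).symm

local notation "X" => PresentedMonoid.of rels

lemma mk_complement_inl_inl {a b : ℤ} (h : a ≠ b) :
    mk rels (complement (.inl a) (.inl b)) = X (.inl (a - 1)) := by
  rw [complement_inl_inl h]; rfl

lemma of_inl_mul_of_inl_sub_one (a b : ℤ) (z : M) :
    X (.inl a) * (X (.inl (a - 1)) * z) = X (.inl b) * (X (.inl (b - 1)) * z) := by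
  simp only [← mul_assoc]
  exact congrArg (· * z) (mk_eq_mk_of_rel (.inr (.inl ⟨a, b, rfl, rfl⟩)))

variable {N : ℕ} {u v : M}

lemma exists_of_inl_mul_eq_inl_mul (hs : FactorsThroughComplement rels complement N)
    {a b : ℤ} (hab : a ≠ b) (hl : length u < N) (h : X (.inl a) * u = X (.inl b) * v) :
    ∃ w, u = X (.inl (a - 1)) * w ∧ v = X (.inl (b - 1)) * w := by
  obtain ⟨w, rfl, rfl⟩ := hs _ _ u v hl h
  exact ⟨w, by rw [mk_complement_inl_inl hab], by rw [mk_complement_inl_inl hab.symm]⟩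

lemma cubeCondition_inl_inl_inl
    (hs : FactorsThroughComplement rels complement N) {a b c : ℤ} (hab : a ≠ b) (hac : a ≠ c)
    (hbc : b ≠ c) : CubeCondition rels complement N (.inl a) (.inl b) (.inl c) :=
  fun d e hl H => by
    rw [mk_complement_inl_inl hab] at hl H
    rw [mk_complement_inl_inl hac] at H
    simp only [length_mul, length_of] at hl
    obtain rfl := hs.mul_left_cancel_of (by omega) H
    refine ⟨d, ?_, ?_⟩ <;> rw [mk_complement_inl_inl (by omega), mk_complement_inl_inl (by omega)]

lemma cubeCondition_inl_inl_of_braid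
    (hs : FactorsThroughComplement rels complement N) {a b : ℤ} {y : S} (hab : a ≠ b)
    (hy : ∀ i, IsBraidPair complement (.inl i) y) :
    CubeCondition rels complement N (.inl a) (.inl b) y := fun d e hl H => by
  have tst i := (hy i).of_mul_of_mul_of isRightComplement
  rw [mk_complement_inl_inl hab] at hl H
  rw [(hy a).mk_complement, mul_assoc] at H
  simp only [length_mul, length_of] at hl
  obtain ⟨r₁, rfl, he⟩ := hs.braid (hy (a - 1)) (by omega) H
  have hle := congrArg length he
  simp only [length_mul, length_of] at hl hle
  obtain ⟨r₂, rfl, hr⟩ := exists_of_inl_mul_eq_inl_mul hs (by omega : a ≠ a - 1) (by omega) he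
  obtain ⟨r₃, rfl, rfl⟩ := hs.braid (hy (a - 1 - 1)).symm (by omega) hr
  rw [mk_complement_inl_inl hab.symm, (hy b).mk_complement, (hy a).symm.mk_complement,
    (hy b).symm.mk_complement]
  refine ⟨X (.inl (b - 1)) * (X y * (X (.inl (b - 1 - 1)) * r₃)), ?_, ?_⟩
  · simp only [mul_assoc]
    rw [of_inl_mul_of_inl_sub_one (a - 1) (b - 1), tst (b - 1), ← tst (b - 1 - 1),
      of_inl_mul_of_inl_sub_one (b - 1) b]
  · simp only [mul_assoc]
    rw [← tst (a - 1), of_inl_mul_of_inl_sub_one a b, of_inl_mul_of_inl_sub_one (a - 1) (b - 1),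
      tst (b - 1)]

lemma cubeCondition_inl_inl_of_commuting
    (hs : FactorsThroughComplement rels complement N) {a b : ℤ} {y : S} (hab : a ≠ b)
    (hy : ∀ i, IsCommutingPair complement (.inl i) y) :
    CubeCondition rels complement N (.inl a) (.inl b) y := fun d e hl H => by
  rw [mk_complement_inl_inl hab] at hl H
  rw [(hy a).mk_complement] at H
  simp only [length_mul, length_of] at hl
  obtain ⟨r, rfl, rfl⟩ := hs.commute (hy (a - 1)) (by omega) H
  rw [mk_complement_inl_inl hab.symm, (hy b).mk_complement, (hy a).symm.mk_complement,
    (hy b).symm.mk_complement]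
  exact ⟨X (.inl (b - 1)) * r, (hy (b - 1)).of_mul_of isRightComplement r,
    of_inl_mul_of_inl_sub_one a b r⟩

lemma cubeCondition_of_braid_inl_inl
    (hs : FactorsThroughComplement rels complement N) {b c : ℤ} {z : S} (hbc : b ≠ c)
    (hz : ∀ i, IsBraidPair complement (.inl i) z) :
    CubeCondition rels complement N z (.inl b) (.inl c) := fun d e hl H => by
  have tst i := (hz i).of_mul_of_mul_of isRightComplement
  rw [(hz b).symm.mk_complement] at hl H
  rw [(hz c).symm.mk_complement, mul_assoc, mul_assoc] at H
  have hle := congrArg length H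
  simp only [length_mul, length_of] at hl hle
  obtain ⟨r₁, hd, he⟩ :=
    exists_of_inl_mul_eq_inl_mul hs hbc (by simp only [length_mul, length_of]; omega) H
  obtain ⟨r₂, rfl, rfl⟩ := hs.braid (hz (b - 1)).symm (by omega) hd
  simp only [length_mul, length_of] at hl hle
  obtain ⟨ρ, rfl, hρ⟩ := hs.braid (hz (c - 1)).symm (by omega) he
  simp only [length_mul, length_of] at hle
  obtain ⟨σ, rfl, rfl⟩ := exists_of_inl_mul_eq_inl_mul hs (by omega : b - 1 ≠ c - 1) (by omega)
    (hs.mul_left_cancel_of (by simp only [length_mul, length_of]; omega) hρ)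
  rw [(hz b).mk_complement, (hz c).mk_complement, mk_complement_inl_inl hbc,
    mk_complement_inl_inl hbc.symm]
  refine ⟨X z * (X (.inl (b - 1)) * (X (.inl (b - 1 - 1)) * (X z * σ))), ?_, ?_⟩
  · simp only [mul_assoc]
    rw [of_inl_mul_of_inl_sub_one b (b - 1), tst (b - 1 - 1), ← tst (b - 1)]
  · simp only [mul_assoc]
    rw [of_inl_mul_of_inl_sub_one c (c - 1), tst (c - 1 - 1), ← tst (c - 1),
      of_inl_mul_of_inl_sub_one (b - 1) (c - 1)]

lemma cubeCondition_of_commuting_inl_inl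
    (hs : FactorsThroughComplement rels complement N) {b c : ℤ} {z : S} (hbc : b ≠ c)
    (hz : ∀ i, IsCommutingPair complement (.inl i) z) :
    CubeCondition rels complement N z (.inl b) (.inl c) := fun d e hl H => by
  rw [(hz b).symm.mk_complement] at hl H
  rw [(hz c).symm.mk_complement] at H
  simp only [length_mul, length_of] at hl
  obtain ⟨r, rfl, rfl⟩ := exists_of_inl_mul_eq_inl_mul hs hbc (by omega) H
  rw [(hz b).mk_complement, (hz c).mk_complement, mk_complement_inl_inl hbc,
    mk_complement_inl_inl hbc.symm]
  exact ⟨X z * r, ((hz (b - 1)).of_mul_of isRightComplement r).symm,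
    ((hz (c - 1)).of_mul_of isRightComplement r).symm⟩

theorem cubeCondition (hs : FactorsThroughComplement rels complement N) {x₁ x y : S}
    (h₁ : x₁ ≠ x) (h₂ : x₁ ≠ y) (h₃ : x ≠ y) : CubeCondition rels complement N x₁ x y := by
  have artin (h₁' : ¬ (x₁.isLeft ∧ x.isLeft)) (h₂' : ¬ (x₁.isLeft ∧ y.isLeft))
      (h₃' : ¬ (x.isLeft ∧ y.isLeft)) : CubeCondition rels complement N x₁ x y :=
    hs.cubeCondition_of_artin isRightComplement (isBraidPair_or_isCommutingPair h₁ h₁')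
      (isBraidPair_or_isCommutingPair h₂ h₂') (isBraidPair_or_isCommutingPair h₃ h₃')
      fun ⟨b₁, b₂, b₃⟩ => not_linked_triangle x₁ x y (linked_of_isBraidPair b₁)
        (linked_of_isBraidPair b₂) (linked_of_isBraidPair b₃)
  rcases x₁ with a | m <;> rcases x with b | j <;> rcases y with c | k <;>
    simp only [ne_eq, Sum.inl.injEq, Sum.inr.injEq, reduceCtorEq, not_false_eq_true] at h₁ h₂ h₃
  · exact cubeCondition_inl_inl_inl hs h₁ h₂ h₃
  · rcases isBraidPair_inl_or_isCommutingPair_inl k with hk | hk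
    · exact cubeCondition_inl_inl_of_braid hs h₁ hk
    · exact cubeCondition_inl_inl_of_commuting hs h₁ hk
  · rcases isBraidPair_inl_or_isCommutingPair_inl j with hj | hj
    · exact (cubeCondition_inl_inl_of_braid hs h₂ hj).swap
    · exact (cubeCondition_inl_inl_of_commuting hs h₂ hj).swap
  · exact artin (by simp) (by simp) (by simp)
  · rcases isBraidPair_inl_or_isCommutingPair_inl m with hm | hm
    · exact cubeCondition_of_braid_inl_inl hs h₃ hm
    · exact cubeCondition_of_commuting_inl_inl hs h₃ hm
  all_goals exact artin (by simp) (by simp) (by simp)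

instance : IsLeftCancelMul M :=
  isRightComplement.isLeftCancelMul fun _ hs _ _ _ => cubeCondition hs

def mirror : S → S
  | .inl i => .inl (-i)
  | .inr j => .inr j

lemma mirror_mirror (x : S) : mirror (mirror x) = x := by
  cases x <;> simp [mirror]

def reverse : M →* Mᵐᵒᵖ :=
  PresentedMonoid.lift (fun x => .op (X (mirror x))) fun a b => by
    rintro (⟨i, j, hj, rfl, rfl⟩ | ⟨i, j, rfl, rfl⟩ | ⟨q, hq, rfl, rfl⟩ |
      ⟨i, j, hij, h, h', rfl, rfl⟩ | ⟨i, j, hj, rfl, rfl⟩) <;>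
    apply MulOpposite.unop_injective <;>
    simp only [t, s, map_mul, FreeMonoid.lift_eval_of, MulOpposite.unop_mul, MulOpposite.unop_op,
      mirror]
    · exact mk_eq_mk_of_rel (.inl ⟨-i, j, hj, rfl, rfl⟩)
    · rw [show -(i - 1) = 1 - i by ring, show -i = 1 - i - 1 by ring,
        show -(j - 1) = 1 - j by ring, show -j = 1 - j - 1 by ring]
      exact mk_eq_mk_of_rel (.inr (.inl ⟨1 - i, 1 - j, rfl, rfl⟩))
    · exact mk_eq_mk_of_rel (.inr (.inr (.inl ⟨q, hq, rfl, rfl⟩)))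
    · exact (mk_eq_mk_of_rel (.inr (.inr (.inr (.inl ⟨i, j, hij, h, h', rfl, rfl⟩))))).symm
    · exact (mk_eq_mk_of_rel (.inr (.inr (.inr (.inr ⟨-i, j, hj, rfl, rfl⟩))))).symm

lemma reverse_injective : Function.Injective reverse := by
  have h (m : M) : (reverse (reverse m).unop).unop = m := by
    obtain ⟨a, rfl⟩ := surjective_mk m
    induction a using FreeMonoid.inductionOn' with
    | one => rfl
    | of_mul x a ih =>
      rw [map_mul, map_mul, MulOpposite.unop_mul, map_mul, MulOpposite.unop_mul, ih]
      exact congrArg (· * _) (congrArg X (mirror_mirror x))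
  exact Function.LeftInverse.injective (g := fun m : Mᵐᵒᵖ => (reverse m.unop).unop) h

instance : IsRightCancelMul M :=
  reverse_injective.isRightCancelMul _ (map_mul reverse)

theorem cancellative :
    ∀ u v w : M, (u * v = u * w → v = w) ∧ (v * u = w * u → v = w) :=
  fun _ _ _ => ⟨fun h => mul_left_cancel h, fun h => mul_right_cancel h⟩

end EllipticE7Monoid
end
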